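/- arXiv:2204.04047 — 12 statements merged into one kernel-verified Lean document; each statement's English description precedes it below -/
import Mathlib

section
/- Let μ be a nonzero positive finite Borel measure on [0,1] and define Φ(s) = ∫₀¹ s^α dμ(α) for s ∈ ℂ∖(−∞,0], where s^α = exp(α·Log s) with the principal logarithm. Then for every s = R·e^{iθ} with R > 0 and |θ| < π one has cos(|θ|/2)·min(1,R)·μ([0,1]) ≤ |Φ(s)| ≤ max(1,R)·μ([0,1]). In particular Φ has no zeros in ℂ∖(−∞,0]. -/
/-!
For `x ∈ [0,1]` write `s ^ x = |s|^x e^{i x θ}` with `θ = arg s`. The modulus `|s|^x` lies between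
`min 1 |s|` and `max 1 |s|`, which gives the upper bound at once. For the lower bound rotate by
`e^{-iθ/2}`: the rotated integrand has real part `|s|^x cos((x - 1/2) θ)`, and `|(x - 1/2) θ| ≤ |θ|/2`,
so that real part is at least `cos(|θ|/2) min 1 |s|` throughout `[0,1]`. Integrating and using
`‖z‖ ≥ Re z` bounds `‖Φ(s)‖` from below.
-/

open MeasureTheory Complex Set

/-- `Phi μ s = ∫₀¹ s^α dμ(α)`, with the principal branch of the complex power. -/
noncomputable def Phi (μ : Measure ℝ) (s : ℂ) : ℂ :=
  ∫ α in Set.Icc (0:ℝ) 1, s ^ (α : ℂ) ∂μ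

namespace Real

lemma min_one_le_rpow {R x : ℝ} (hR : 0 < R) (hx : x ∈ Icc (0 : ℝ) 1) : min 1 R ≤ R ^ x := by
  rcases le_total R 1 with hR1 | hR1
  · calc min 1 R ≤ R ^ (1 : ℝ) := by rw [rpow_one]; exact min_le_right _ _
      _ ≤ R ^ x := rpow_le_rpow_of_exponent_ge hR hR1 hx.2
  · exact (min_le_left _ _).trans (one_le_rpow hR1 hx.1)

lemma rpow_le_max_one {R x : ℝ} (hR : 0 ≤ R) (hx : x ∈ Icc (0 : ℝ) 1) : R ^ x ≤ max 1 R := by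
  rcases le_total R 1 with hR1 | hR1
  · exact (rpow_le_one hR hR1 hx.1).trans (le_max_left _ _)
  · calc R ^ x ≤ R ^ (1 : ℝ) := rpow_le_rpow_of_exponent_le hR1 hx.2
      _ ≤ max 1 R := by rw [rpow_one]; exact le_max_right _ _

lemma cos_half_abs_le_cos_mul {x θ : ℝ} (hx : x ∈ Icc (0 : ℝ) 1) (hθ : |θ| ≤ π) :
    cos (|θ| / 2) ≤ cos ((x - 1 / 2) * θ) := by
  have hx' : |x - 1 / 2| ≤ 1 / 2 := abs_le.mpr ⟨by linarith [hx.1], by linarith [hx.2]⟩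
  have hmul : |(x - 1 / 2) * θ| ≤ |θ| / 2 := by
    rw [abs_mul]
    nlinarith [abs_nonneg θ]
  rw [← cos_abs ((x - 1 / 2) * θ)]
  exact cos_le_cos_of_nonneg_of_le_pi (abs_nonneg _) (by linarith [pi_pos]) hmul

end Real

namespace Complex

lemma re_exp_neg_half_arg_mul_cpow (s : ℂ) (x : ℝ) :
    (exp (↑(-(arg s / 2)) * I) * s ^ (x : ℂ)).re = ‖s‖ ^ x * Real.cos ((x - 1 / 2) * arg s) := by
  have hphase : (↑(-(arg s / 2)) + ↑(arg s * x)) * I = ↑((x - 1 / 2) * arg s) * I := by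
    push_cast
    ring
  rw [cpow_ofReal, ofReal_cos, ofReal_sin, ← exp_mul_I, mul_left_comm, ← exp_add, ← add_mul,
    hphase, re_ofReal_mul, exp_ofReal_mul_I_re]

end Complex

lemma mul_measureReal_le_norm_setIntegral {α : Type*} [MeasurableSpace α] {μ : Measure α}
    {S : Set α} {f : α → ℂ} (hS : MeasurableSet S) (hμS : μ S ≠ ⊤) (hf : IntegrableOn f S μ)
    {u : ℂ} (hu : ‖u‖ = 1) {m : ℝ} (hm : ∀ x ∈ S, m ≤ (u * f x).re) :
    m * μ.real S ≤ ‖∫ x in S, f x ∂μ‖ := by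
  have hre : ∫ x in S, (u * f x).re ∂μ = (u * ∫ x in S, f x ∂μ).re := by
    rw [← integral_const_mul]
    exact integral_re (hf.const_mul u)
  calc m * μ.real S = ∫ _ in S, m ∂μ := by rw [setIntegral_const, smul_eq_mul, mul_comm]
    _ ≤ ∫ x in S, (u * f x).re ∂μ :=
        setIntegral_mono_on (integrableOn_const hμS) (hf.const_mul u).re hS hm
    _ = (u * ∫ x in S, f x ∂μ).re := hre
    _ ≤ ‖∫ x in S, f x ∂μ‖ := by simpa [hu] using re_le_norm (u * ∫ x in S, f x ∂μ)

section Phi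

variable (μ : Measure ℝ) [IsFiniteMeasure μ]

lemma norm_Phi_le (s : ℂ) : ‖Phi μ s‖ ≤ max 1 ‖s‖ * μ.real (Icc 0 1) :=
  norm_setIntegral_le_of_norm_le_const (measure_lt_top μ _) fun x hx => by
    rw [norm_cpow_real]
    exact Real.rpow_le_max_one (norm_nonneg s) hx

lemma cos_half_abs_arg_mul_le_norm_Phi {s : ℂ} (hs : s ≠ 0) :
    Real.cos (|arg s| / 2) * min 1 ‖s‖ * μ.real (Icc 0 1) ≤ ‖Phi μ s‖ := by
  have hint : IntegrableOn (fun x : ℝ => s ^ (x : ℂ)) (Icc 0 1) μ :=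
    (continuous_ofReal.const_cpow (Or.inl hs)).continuousOn.integrableOn_compact isCompact_Icc
  refine mul_measureReal_le_norm_setIntegral measurableSet_Icc (measure_ne_top μ _) hint
    (u := exp (↑(-(arg s / 2)) * I)) (by rw [norm_exp_ofReal_mul_I]) fun x hx => ?_
  have hcos := Real.cos_half_abs_le_cos_mul hx (abs_arg_le_pi s)
  have hcos_nonneg : 0 ≤ Real.cos (|arg s| / 2) :=
    Real.cos_nonneg_of_mem_Icc ⟨by linarith [abs_nonneg (arg s), Real.pi_pos],
      by linarith [abs_arg_le_pi s]⟩
  rw [re_exp_neg_half_arg_mul_cpow, mul_comm (‖s‖ ^ x)]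
  exact mul_le_mul hcos (Real.min_one_le_rpow (norm_pos_iff.mpr hs) hx)
    (le_min zero_le_one (norm_nonneg s)) (hcos_nonneg.trans hcos)

end Phi

theorem stmt_0 (μ : Measure ℝ) [IsFiniteMeasure μ] (hμ : μ ≠ 0)
    (hsupp : μ (Set.Icc (0:ℝ) 1)ᶜ = 0)
    (R θ : ℝ) (hR : 0 < R) (hθ : |θ| < Real.pi) :
    Real.cos (|θ| / 2) * min 1 R * (μ (Set.Icc (0:ℝ) 1)).toReal
       ≤ ‖Phi μ ((R : ℂ) * Complex.exp ((θ : ℂ) * Complex.I))‖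
    ∧ ‖Phi μ ((R : ℂ) * Complex.exp ((θ : ℂ) * Complex.I))‖
       ≤ max 1 R * (μ (Set.Icc (0:ℝ) 1)).toReal
    ∧ Phi μ ((R : ℂ) * Complex.exp ((θ : ℂ) * Complex.I)) ≠ 0 := by
  set s : ℂ := (R : ℂ) * exp ((θ : ℂ) * I)
  have hnorm : ‖s‖ = R := by simp [s, abs_of_pos hR]
  have harg : arg s = θ := by
    change arg (R * exp (θ * I)) = θ
    rw [exp_mul_I]
    exact arg_mul_cos_add_sin_mul_I hR (Ioo_subset_Ioc_self (abs_lt.mp hθ))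
  have hlower := cos_half_abs_arg_mul_le_norm_Phi μ (show s ≠ 0 by simp [s, hR.ne'])
  rw [hnorm, harg] at hlower
  have hμIcc : 0 < μ.real (Icc 0 1) := by
    refine ENNReal.toReal_pos (fun h => hμ ?_) (measure_ne_top μ _)
    have hae : ∀ᵐ x ∂μ, x ∈ Icc (0 : ℝ) 1 := mem_ae_iff.mpr hsupp
    rw [← Measure.restrict_eq_self_of_ae_mem hae, Measure.restrict_eq_zero.mpr h]
  have hcos : 0 < Real.cos (|θ| / 2) :=
    Real.cos_pos_of_mem_Ioo ⟨by linarith [abs_nonneg θ], by linarith⟩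
  exact ⟨hlower, hnorm ▸ norm_Phi_le μ s, norm_pos_iff.mp (hlower.trans_lt' (by positivity))⟩
end

section
/- Let μ be a nonzero positive finite Borel measure on [0,1], let M := max supp μ be the largest point of its support, and for R > 0 and θ ∈ [−π,π] set Φ(R·e^{iθ}) := ∫₀¹ R^α e^{iαθ} dμ(α). Then for every ε > 0 there exists R₀ > 0 such that |Φ(R·e^{iθ}) − μ({M})·R^M·e^{iMθ}| ≤ ε·R^M for all R ≥ R₀ and all θ ∈ [−π,π]. (In particular, if μ has no atom at M then Φ(s) = o(|s|^M) as |s| → ∞, uniformly in the argument.) -/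
open MeasureTheory Complex Set

/-- `PhiP μ R θ = ∫₀¹ R^α e^{iαθ} dμ(α)` (polar form, including boundary values θ = ±π). -/
noncomputable def PhiP (μ : Measure ℝ) (R θ : ℝ) : ℂ :=
  ∫ α in Set.Icc (0:ℝ) 1, ((R ^ α : ℝ) : ℂ) * Complex.exp ((α * θ : ℝ) * Complex.I) ∂μ

/-- `M` is the largest point of the support of the measure `μ` (supported in `[0,1]`). -/
def IsMaxSupport (μ : Measure ℝ) (M : ℝ) : Prop :=
  M ∈ Set.Icc (0:ℝ) 1 ∧ μ (Set.Ioi M) = 0 ∧ ∀ ε > 0, 0 < μ (Set.Icc (M - ε) M)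

/-!
Split off the atom at `M`: the rest of `Φ(R e^{iθ})` has norm at most
`R^M ∫_{[0,1] \ {M}} R^{α - M} dμ(α)`, independently of `θ`. Since `μ` charges nothing above
`M`, the integrand is `μ`-a.e. bounded by `1` for `R ≥ 1` and tends to `0` pointwise, so the
integral tends to `0` by dominated convergence.
-/

open Filter Topology

theorem tendsto_integral_rpow_sub_atTop {ν : Measure ℝ} [IsFiniteMeasure ν] {M : ℝ}
    (h : ∀ᵐ α ∂ν, α < M) :
    Tendsto (fun R : ℝ => ∫ α, R ^ (α - M) ∂ν) atTop (𝓝 0) := by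
  have hlim := tendsto_integral_filter_of_dominated_convergence (μ := ν) (fun _ => (1 : ℝ))
    (F := fun (R : ℝ) α => R ^ (α - M)) (f := fun _ => 0)
    (Eventually.of_forall fun R =>
      (measurable_const.pow (measurable_id.sub_const M)).aestronglyMeasurable)
    (by
      filter_upwards [eventually_ge_atTop 1] with R hR
      filter_upwards [h] with α hα
      rw [Real.norm_of_nonneg (Real.rpow_nonneg (by linarith) _)]
      exact Real.rpow_le_one_of_one_le_of_nonpos hR (by linarith))
    (integrable_const 1)
    (by
      filter_upwards [h] with α hα
      simpa using tendsto_rpow_neg_atTop (sub_pos.2 hα))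
  simpa using hlim

theorem setIntegral_eq_measureReal_singleton_smul_add_sdiff {X E : Type*} [MeasurableSpace X]
    [MeasurableSingletonClass X] [NormedAddCommGroup E] [NormedSpace ℝ E] [CompleteSpace E]
    {μ : Measure X} {f : X → E} {s : Set X} {a : X} (hf : IntegrableOn f s μ) (ha : a ∈ s) :
    ∫ x in s, f x ∂μ = μ.real {a} • f a + ∫ x in s \ {a}, f x ∂μ := by
  rw [← integral_inter_add_sdiff (measurableSet_singleton a) hf,
    inter_eq_right.2 (singleton_subset_iff.2 ha), integral_singleton]

theorem norm_PhiP_sub_atom_le (μ : Measure ℝ) [IsFiniteMeasure μ] {M R : ℝ}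
    (hM : M ∈ Icc (0 : ℝ) 1) (hR : 0 < R) (θ : ℝ) :
    ‖PhiP μ R θ - ((μ {M}).toReal : ℂ) * ((R ^ M : ℝ) : ℂ) * exp ((M * θ : ℝ) * I)‖
      ≤ R ^ M * ∫ α in Icc (0 : ℝ) 1 \ {M}, R ^ (α - M) ∂μ := by
  set f : ℝ → ℂ := fun α => ((R ^ α : ℝ) : ℂ) * exp ((α * θ : ℝ) * I) with hf_def
  have hf : Continuous f := by
    have : Continuous fun α : ℝ => R ^ α :=
      continuous_const.rpow continuous_id fun _ => Or.inl hR.ne'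
    fun_prop
  have hnorm : ∀ α, ‖f α‖ = R ^ M * R ^ (α - M) := fun α => by
    rw [← Real.rpow_add hR, add_sub_cancel, hf_def, norm_mul, norm_exp_ofReal_mul_I, mul_one,
      norm_real, Real.norm_of_nonneg (Real.rpow_nonneg hR.le α)]
  rw [PhiP, setIntegral_eq_measureReal_singleton_smul_add_sdiff hf.integrableOn_Icc hM,
    ← integral_const_mul]
  calc _ = ‖∫ α in Icc (0 : ℝ) 1 \ {M}, f α ∂μ‖ := by
        rw [measureReal_def, real_smul, hf_def, ← mul_assoc, add_sub_cancel_left]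
    _ ≤ ∫ α in Icc (0 : ℝ) 1 \ {M}, ‖f α‖ ∂μ := norm_integral_le_integral_norm _
    _ = _ := by simp_rw [hnorm]

theorem stmt_1_general (μ : Measure ℝ) [IsFiniteMeasure μ] (M : ℝ) (hM : IsMaxSupport μ M) :
    ∀ ε > 0, ∃ R₀ > 0, ∀ R ≥ R₀, ∀ θ ∈ Set.Icc (-Real.pi) Real.pi,
      ‖PhiP μ R θ -
          ((μ {M}).toReal : ℂ) * ((R ^ M : ℝ) : ℂ) * Complex.exp ((M * θ : ℝ) * Complex.I)‖
        ≤ ε * R ^ M := by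
  intro ε hε
  obtain ⟨hM01, hIoi, -⟩ := hM
  have hlt : ∀ᵐ α ∂μ.restrict (Icc (0 : ℝ) 1 \ {M}), α < M := by
    rw [ae_restrict_iff' (measurableSet_Icc.diff (measurableSet_singleton M))]
    filter_upwards [measure_eq_zero_iff_ae_notMem.1 hIoi] with α hα hαS
    exact lt_of_le_of_ne (not_lt.1 hα) hαS.2
  obtain ⟨R₀, hR₀⟩ :=
    eventually_atTop.1 ((tendsto_integral_rpow_sub_atTop hlt).eventually (ge_mem_nhds hε))
  refine ⟨max R₀ 1, by positivity, fun R hR θ _ => ?_⟩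
  have hRpos : 0 < R := one_pos.trans_le (le_of_max_le_right hR)
  calc _ ≤ R ^ M * ∫ α in Icc (0 : ℝ) 1 \ {M}, R ^ (α - M) ∂μ :=
        norm_PhiP_sub_atom_le μ hM01 hRpos θ
    _ ≤ R ^ M * ε := by gcongr; exact hR₀ R (le_of_max_le_left hR)
    _ = ε * R ^ M := mul_comm _ _

theorem stmt_1 (μ : Measure ℝ) [IsFiniteMeasure μ] (hμ : μ ≠ 0)
    (hsupp : μ (Set.Icc (0:ℝ) 1)ᶜ = 0) (M : ℝ) (hM : IsMaxSupport μ M) :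
    ∀ ε > 0, ∃ R₀ > 0, ∀ R ≥ R₀, ∀ θ ∈ Set.Icc (-Real.pi) Real.pi,
      ‖PhiP μ R θ -
          ((μ {M}).toReal : ℂ) * ((R ^ M : ℝ) : ℂ) * Complex.exp ((M * θ : ℝ) * Complex.I)‖
        ≤ ε * R ^ M :=
  stmt_1_general μ M hM
end

section
/- Let μ be a nonzero positive finite Borel measure on [0,1], let M := max supp μ, and for R > 0 and θ ∈ [−π,π] set Φ(R·e^{iθ}) := ∫₀¹ R^α e^{iαθ} dμ(α). Then for every ε with 0 < ε < 1 there exist c > 0 and R₀ > 0 such that |Φ(R·e^{iθ})| ≥ c·R^{M−ε} for all R ≥ R₀ and all θ ∈ [−π,π]. -/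
open MeasureTheory Complex Set

/-!
Multiplying by the unimodular factor `e^{-iMθ}` gives
`‖Φ(R e^{iθ})‖ ≥ ∫ R^α cos((α - M)θ) dμ(α)`. For `δ ≤ 1/3` and `|θ| ≤ π` the cosine is at least
`1/2` on `[M - δ, M]`, so the positive mass `μ[M - δ/2, M]` contributes at least
`R^{M-δ/2} μ[M - δ/2, M] / 2`, while the part of `μ` below `M - δ` contributes at least
`-R^{M-δ} μ(ℝ)`, which is negligible as `R → ∞`. With `δ = min(ε, 1/3)` this gives the bound with
`c = μ[M - δ/2, M] / 4`.
-/

open Filter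

theorem re_integral_exp_mul_le_norm_integral {X : Type*} [MeasurableSpace X] {μ : Measure X}
    {g : X → ℂ} (hg : Integrable g μ) (φ : ℝ) :
    ∫ x, (exp (φ * I) * g x).re ∂μ ≤ ‖∫ x, g x ∂μ‖ :=
  calc ∫ x, (exp (φ * I) * g x).re ∂μ = (exp (φ * I) * ∫ x, g x ∂μ).re := by
        rw [← integral_const_mul, ← RCLike.re_to_complex, ← integral_re (hg.const_mul _)]
        rfl
    _ ≤ ‖exp (φ * I) * ∫ x, g x ∂μ‖ := re_le_norm _
    _ = ‖∫ x, g x ∂μ‖ := by rw [norm_mul, norm_exp_ofReal_mul_I, one_mul]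

theorem setIntegral_rpow_mul_cos_le_norm_PhiP (μ : Measure ℝ) [IsFiniteMeasure μ] {R : ℝ}
    (hR : 0 < R) (M θ : ℝ) :
    ∫ α in Icc 0 1, R ^ α * Real.cos ((α - M) * θ) ∂μ ≤ ‖PhiP μ R θ‖ := by
  have hcont : Continuous fun α : ℝ => ((R ^ α : ℝ) : ℂ) * exp ((α * θ : ℝ) * I) := by
    have : Continuous fun α : ℝ => R ^ α := continuous_const.rpow continuous_id fun _ => .inl hR.ne'
    fun_prop
  unfold PhiP
  convert re_integral_exp_mul_le_norm_integral (hcont.integrableOn_Icc (μ := μ)) (-(M * θ))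
    using 3 with α
  rw [mul_left_comm, ← exp_add, ← add_mul, ← ofReal_add, re_ofReal_mul, exp_ofReal_mul_I_re]
  ring_nf

theorem one_half_le_cos_of_abs_le_pi_div_three {x : ℝ} (hx : |x| ≤ Real.pi / 3) :
    1 / 2 ≤ Real.cos x := by
  rw [← Real.cos_abs, ← Real.cos_pi_div_three]
  exact Real.cos_le_cos_of_nonneg_of_le_pi (abs_nonneg x) (by linarith [Real.pi_pos]) hx

theorem eventually_mul_rpow_le_mul_rpow {a b : ℝ} (hba : b < a) (K : ℝ) {m : ℝ} (hm : 0 < m) :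
    ∀ᶠ R in atTop, K * R ^ b ≤ m * R ^ a := by
  filter_upwards [(tendsto_rpow_atTop (sub_pos.2 hba)).eventually_ge_atTop (K / m),
    eventually_gt_atTop 0] with R hRab hR
  calc K * R ^ b ≤ m * R ^ (a - b) * R ^ b := by
        gcongr
        rwa [← div_le_iff₀' hm]
    _ = m * R ^ a := by rw [mul_assoc, ← Real.rpow_add hR, sub_add_cancel]

theorem indicator_sub_rpow_le_rpow_mul_cos {R η δ θ M α : ℝ} (hR : 1 ≤ R) (hηδ : η ≤ δ)
    (hδ : δ ≤ 1 / 3) (hθ : |θ| ≤ Real.pi) (hα : α ≤ M) :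
    (Icc (M - η) M).indicator (fun _ => R ^ (M - η) / 2) α - R ^ (M - δ) ≤
      R ^ α * Real.cos ((α - M) * θ) := by
  have hRα : 0 ≤ R ^ α := by positivity
  have hRδ : 0 ≤ R ^ (M - δ) := by positivity
  rcases lt_or_ge α (M - δ) with hlt | hge
  · rw [indicator_of_notMem fun h => by linarith [h.1]]
    have := Real.rpow_le_rpow_of_exponent_le hR hlt.le
    nlinarith [Real.neg_one_le_cos ((α - M) * θ)]
  · have hcos : 1 / 2 ≤ Real.cos ((α - M) * θ) := by
      apply one_half_le_cos_of_abs_le_pi_div_three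
      rw [abs_mul]
      calc |α - M| * |θ| ≤ δ * Real.pi :=
            mul_le_mul (abs_le.2 ⟨by linarith, by linarith⟩) hθ (abs_nonneg _) (by linarith)
        _ ≤ Real.pi / 3 := by nlinarith [Real.pi_pos]
    by_cases hmem : α ∈ Icc (M - η) M
    · rw [indicator_of_mem hmem]
      have := Real.rpow_le_rpow_of_exponent_le hR hmem.1
      nlinarith
    · rw [indicator_of_notMem hmem]
      nlinarith

theorem le_integral_rpow_mul_cos {ν : Measure ℝ} [IsFiniteMeasure ν] {M : ℝ} (hν : ν (Ioi M) = 0)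
    {R η δ θ : ℝ} (hR : 1 ≤ R) (hηδ : η ≤ δ) (hδ : δ ≤ 1 / 3) (hθ : |θ| ≤ Real.pi) :
    R ^ (M - η) / 2 * ν.real (Icc (M - η) M) - R ^ (M - δ) * ν.real univ ≤
      ∫ α, R ^ α * Real.cos ((α - M) * θ) ∂ν := by
  have hle : ∀ᵐ α ∂ν, α ≤ M := ae_iff.2 (measure_mono_null (fun _ h => not_le.1 h) hν)
  have hcont : Continuous fun α : ℝ => R ^ α * Real.cos ((α - M) * θ) :=
    (continuous_const.rpow continuous_id fun _ => .inl (by positivity)).mul (by fun_prop)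
  have hint : Integrable (fun α : ℝ => R ^ α * Real.cos ((α - M) * θ)) ν := by
    refine (integrable_const (R ^ M)).mono' hcont.aestronglyMeasurable (hle.mono fun α hα => ?_)
    rw [norm_mul, Real.norm_of_nonneg (by positivity)]
    calc R ^ α * ‖Real.cos ((α - M) * θ)‖ ≤ R ^ α * 1 := by
          gcongr
          exact Real.abs_cos_le_one _
      _ ≤ R ^ M := by
          rw [mul_one]
          exact Real.rpow_le_rpow_of_exponent_le hR hα
  calc R ^ (M - η) / 2 * ν.real (Icc (M - η) M) - R ^ (M - δ) * ν.real univ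
      = ∫ α, ((Icc (M - η) M).indicator (fun _ => R ^ (M - η) / 2) α - R ^ (M - δ)) ∂ν := by
        rw [integral_sub ((integrable_const _).indicator measurableSet_Icc) (integrable_const _),
          integral_indicator_const _ measurableSet_Icc, integral_const, smul_eq_mul, smul_eq_mul]
        ring
    _ ≤ ∫ α, R ^ α * Real.cos ((α - M) * θ) ∂ν :=
        integral_mono_ae (((integrable_const _).indicator measurableSet_Icc).sub
          (integrable_const _)) hint
          (hle.mono fun α hα => indicator_sub_rpow_le_rpow_mul_cos hR hηδ hδ hθ hα)

theorem stmt_2_general (μ : Measure ℝ) [IsFiniteMeasure μ]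
    (hsupp : μ (Set.Icc (0:ℝ) 1)ᶜ = 0) (M : ℝ) (hM : IsMaxSupport μ M) :
    ∀ ε : ℝ, 0 < ε → ε < 1 →
      ∃ c > 0, ∃ R₀ > 0, ∀ R ≥ R₀, ∀ θ ∈ Set.Icc (-Real.pi) Real.pi,
        c * R ^ (M - ε) ≤ ‖PhiP μ R θ‖ := by
  intro ε hε _
  obtain ⟨-, hM_top, hM_mass⟩ := hM
  set δ := min ε (1 / 3)
  have hδ : 0 < δ := lt_min hε (by norm_num)
  set m := μ.real (Icc (M - δ / 2) M)
  have hm : 0 < m := ENNReal.toReal_pos (hM_mass _ (half_pos hδ)).ne' (measure_ne_top _ _)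
  have hμ : μ.restrict (Icc 0 1) = μ := Measure.restrict_eq_self_of_ae_mem (ae_iff.2 hsupp)
  obtain ⟨R₁, hR₁⟩ := eventually_atTop.1 ((eventually_mul_rpow_le_mul_rpow
    (show M - δ < M - δ / 2 by linarith) (μ.real univ) (by positivity : 0 < m / 4)).and
    (eventually_ge_atTop 1))
  refine ⟨m / 4, by positivity, max R₁ 1, by positivity, fun R hR θ hθ => ?_⟩
  obtain ⟨hdom, hR1⟩ := hR₁ R (le_of_max_le_left hR)
  have hlower := le_integral_rpow_mul_cos (η := δ / 2) (δ := δ) hM_top hR1 (by linarith)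
    (min_le_right ε _) (abs_le.2 hθ)
  have hupper := setIntegral_rpow_mul_cos_le_norm_PhiP μ (zero_lt_one.trans_le hR1) M θ
  rw [hμ] at hupper
  calc m / 4 * R ^ (M - ε) ≤ m / 4 * R ^ (M - δ / 2) := by
        gcongr
        linarith [min_le_left ε (1 / 3)]
    _ ≤ ‖PhiP μ R θ‖ := by linarith

theorem stmt_2 (μ : Measure ℝ) [IsFiniteMeasure μ] (hμ : μ ≠ 0)
    (hsupp : μ (Set.Icc (0:ℝ) 1)ᶜ = 0) (M : ℝ) (hM : IsMaxSupport μ M) :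
    ∀ ε : ℝ, 0 < ε → ε < 1 →
      ∃ c > 0, ∃ R₀ > 0, ∀ R ≥ R₀, ∀ θ ∈ Set.Icc (-Real.pi) Real.pi,
        c * R ^ (M - ε) ≤ ‖PhiP μ R θ‖ :=
  stmt_2_general μ hsupp M hM
end

section
/- Let M ∈ (0,1] and κ > −1. Then there exist C > 0 and R₀ > 1 such that for every s = R·e^{iθ} with R ≥ R₀ and θ ∈ [−π,π] one has |∫₀^M s^α (M−α)^κ dα − Γ(κ+1)·s^M/(log s)^{κ+1}| ≤ C/log R, where log s := log R + iθ, s^α := exp(α·log s), s^M := exp(M·log s), and (log s)^{κ+1} := exp((κ+1)·Log(log s)) with the principal logarithm Log (note Re(log s) = log R > 0, so this is well defined). -/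
open MeasureTheory Complex Set intervalIntegral

/-!
Substituting `t = M - α` turns the integral into `s^M ∫₀^M t^κ e^{-t log s} dt`. Over `(0, ∞)` this
Laplace integral equals `Γ(κ+1) / (log s)^{κ+1}`: for real `log s` it is Euler's integral, and both
sides are holomorphic on the right half-plane `Re (log s) = log R > 0`. What remains is `s^M` times
the tail `∫_M^∞`, and since `t^κ` grows at most exponentially on `[M, ∞)` that tail is
`O(e^{-M log R} / log R)`, which cancels `|s^M| = e^{M log R}`.
-/

open Filter Topology

noncomputable def rpowLaplace (κ : ℝ) (z : ℂ) : ℂ :=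
  ∫ t in Ioi (0 : ℝ), ((t ^ κ : ℝ) : ℂ) * cexp (-(z * t))

lemma norm_rpow_mul_cexp_neg (κ : ℝ) (z : ℂ) {t : ℝ} (ht : 0 ≤ t) :
    ‖((t ^ κ : ℝ) : ℂ) * cexp (-(z * t))‖ = t ^ κ * Real.exp (-(z.re * t)) := by
  rw [norm_mul, norm_real, Real.norm_of_nonneg (Real.rpow_nonneg ht κ), norm_exp]
  simp

lemma continuousOn_rpow_mul_cexp_neg (κ : ℝ) (z : ℂ) :
    ContinuousOn (fun t : ℝ ↦ ((t ^ κ : ℝ) : ℂ) * cexp (-(z * t))) (Ioi 0) :=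
  (continuous_ofReal.comp_continuousOn
    (continuousOn_id.rpow_const fun _ ht ↦ .inl (ne_of_gt ht))).mul (by fun_prop)

lemma integrableOn_rpow_mul_cexp_neg {κ : ℝ} (hκ : -1 < κ) {z : ℂ} (hz : 0 < z.re) :
    IntegrableOn (fun t : ℝ ↦ ((t ^ κ : ℝ) : ℂ) * cexp (-(z * t))) (Ioi 0) := by
  have hbound : IntegrableOn (fun t : ℝ ↦ t ^ κ * Real.exp (-(z.re * t))) (Ioi 0) := by
    simpa using integrableOn_rpow_mul_exp_neg_mul_rpow hκ one_pos hz
  refine hbound.mono'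
    ((continuousOn_rpow_mul_cexp_neg κ z).aestronglyMeasurable measurableSet_Ioi) ?_
  filter_upwards [ae_restrict_mem measurableSet_Ioi] with t ht
  exact (norm_rpow_mul_cexp_neg κ z (le_of_lt ht)).le

lemma differentiableAt_rpowLaplace {κ : ℝ} (hκ : -1 < κ) {z₀ : ℂ} (hz₀ : 0 < z₀.re) :
    DifferentiableAt ℂ (rpowLaplace κ) z₀ := by
  obtain ⟨ε, hε, hz₀ε⟩ : ∃ ε, 0 < ε ∧ z₀.re = 2 * ε := ⟨z₀.re / 2, half_pos hz₀, by ring⟩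
  have hre_ball : ∀ z ∈ Metric.ball z₀ ε, ε < z.re := fun z hz ↦ by
    have := (re_le_norm (z₀ - z)).trans_lt (by rwa [← dist_eq_norm, dist_comm])
    simp only [sub_re] at this
    linarith
  have hbound : IntegrableOn (fun t : ℝ ↦ t ^ (κ + 1) * Real.exp (-(ε * t))) (Ioi 0) := by
    simpa using integrableOn_rpow_mul_exp_neg_mul_rpow (by linarith) one_pos hε
  refine (hasDerivAt_integral_of_dominated_loc_of_deriv_le (μ := volume.restrict (Ioi 0))
    (F' := fun z t ↦ -(((t ^ (κ + 1) : ℝ) : ℂ) * cexp (-(z * t))))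
    (bound := fun t ↦ t ^ (κ + 1) * Real.exp (-(ε * t))) (Metric.ball_mem_nhds z₀ hε)
    (.of_forall fun z ↦ (continuousOn_rpow_mul_cexp_neg κ z).aestronglyMeasurable
      measurableSet_Ioi)
    (integrableOn_rpow_mul_cexp_neg hκ hz₀)
    ((continuousOn_rpow_mul_cexp_neg (κ + 1) z₀).neg.aestronglyMeasurable measurableSet_Ioi)
    ?_ hbound ?_).2.differentiableAt
  · filter_upwards [ae_restrict_mem measurableSet_Ioi] with t (ht : 0 < t) z hz
    rw [norm_neg, norm_rpow_mul_cexp_neg _ _ ht.le]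
    gcongr
    exact (hre_ball z hz).le
  · filter_upwards [ae_restrict_mem measurableSet_Ioi] with t (ht : 0 < t) z _
    have h := ((hasDerivAt_mul_const (x := z) (t : ℂ)).neg.cexp).const_mul (((t ^ κ : ℝ) : ℂ))
    refine h.congr_deriv ?_
    rw [Real.rpow_add_one ht.ne', Pi.neg_apply]
    push_cast
    ring

lemma rpowLaplace_ofReal {κ : ℝ} (hκ : -1 < κ) {r : ℝ} (hr : 0 < r) :
    rpowLaplace κ r = Real.Gamma (κ + 1) / (r : ℂ) ^ ((κ : ℂ) + 1) := by
  have key := integral_cpow_mul_exp_neg_mul_Ioi (a := (κ : ℂ) + 1) (by simp; linarith) hr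
  rw [add_sub_cancel_right, one_div, inv_cpow _ _ (by simp [arg_ofReal_of_nonneg hr.le,
    Real.pi_ne_zero.symm]), ← ofReal_one, ← ofReal_add, Gamma_ofReal, ← div_eq_inv_mul] at key
  push_cast at key
  rw [← key, rpowLaplace]
  refine setIntegral_congr_fun measurableSet_Ioi fun t ht ↦ ?_
  rw [ofReal_cpow (le_of_lt ht)]

lemma rpowLaplace_eq {κ : ℝ} (hκ : -1 < κ) {z : ℂ} (hz : 0 < z.re) :
    rpowLaplace κ z = Real.Gamma (κ + 1) / z ^ ((κ : ℂ) + 1) := by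
  let U : Set ℂ := {w | 0 < w.re}
  have hU : IsOpen U := isOpen_lt continuous_const continuous_re
  have hlhs : AnalyticOnNhd ℂ (rpowLaplace κ) U :=
    DifferentiableOn.analyticOnNhd (fun w hw ↦ (differentiableAt_rpowLaplace hκ hw)
      |>.differentiableWithinAt) hU
  have hrhs : AnalyticOnNhd ℂ (fun w ↦ (Real.Gamma (κ + 1) : ℂ) / w ^ ((κ : ℂ) + 1)) U :=
    ((differentiableOn_const _).div (differentiableOn_id.cpow_const fun _ hw ↦ .inl hw)
      fun w (hw : 0 < w.re) h ↦ by
        have hw0 : w = 0 := ((cpow_eq_zero_iff _ _).1 h).1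
        simp [hw0] at hw).analyticOnNhd hU
  have hreal : Tendsto ofReal (𝓝[>] 1) (𝓝[≠] 1) :=
    tendsto_nhdsWithin_of_tendsto_nhds_of_eventually_within _
      (continuous_ofReal.tendsto' 1 1 ofReal_one |>.mono_left nhdsWithin_le_nhds)
      (eventually_nhdsWithin_of_forall fun r (hr : 1 < r) ↦ by simpa using hr.ne')
  have hagree :
      ∀ᶠ r : ℝ in 𝓝[>] 1, rpowLaplace κ r = Real.Gamma (κ + 1) / (r : ℂ) ^ ((κ : ℂ) + 1) :=
    eventually_nhdsWithin_of_forall fun r (hr : 1 < r) ↦ rpowLaplace_ofReal hκ (one_pos.trans hr)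
  exact hlhs.eqOn_of_preconnected_of_frequently_eq hrhs (convex_halfSpace_re_gt 0).isPreconnected
    (by simp [U]) (hreal.frequently hagree.frequently) hz

lemma rpow_le_rpow_mul_exp (κ : ℝ) {M t : ℝ} (hM : 0 < M) (ht : M ≤ t) :
    t ^ κ ≤ M ^ κ * Real.exp (|κ| * (t / M - 1)) := by
  have htM : 0 < t / M := div_pos (hM.trans_le ht) hM
  have hlog : 0 ≤ Real.log (t / M) := Real.log_nonneg ((one_le_div hM).2 ht)
  calc t ^ κ = M ^ κ * Real.exp (Real.log (t / M) * κ) := by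
        rw [← Real.rpow_def_of_pos htM, ← Real.mul_rpow hM.le htM.le, mul_div_cancel₀ _ hM.ne']
    _ ≤ M ^ κ * Real.exp (|κ| * (t / M - 1)) := by
        refine mul_le_mul_of_nonneg_left (Real.exp_le_exp.2 ?_) (by positivity)
        calc Real.log (t / M) * κ ≤ Real.log (t / M) * |κ| := by gcongr; exact le_abs_self κ
          _ ≤ (t / M - 1) * |κ| := by gcongr; exact Real.log_le_sub_one_of_pos htM
          _ = |κ| * (t / M - 1) := mul_comm _ _

lemma norm_setIntegral_Ioi_le_of_norm_le_exp {E : Type*} [NormedAddCommGroup E] [NormedSpace ℝ E]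
    {g : ℝ → E} {a b B : ℝ} (hb : 0 < b) (hg : ∀ t > a, ‖g t‖ ≤ B * Real.exp (-b * t)) :
    ‖∫ t in Ioi a, g t‖ ≤ B * Real.exp (-b * a) / b := by
  have hexp := integrableOn_exp_mul_Ioi (neg_neg_of_pos hb) a
  calc ‖∫ t in Ioi a, g t‖ ≤ ∫ t in Ioi a, B * Real.exp (-b * t) :=
        norm_integral_le_of_norm_le (hexp.const_mul B)
          ((ae_restrict_mem measurableSet_Ioi).mono hg)
    _ = B * Real.exp (-b * a) / b := by
        rw [MeasureTheory.integral_const_mul, integral_exp_mul_Ioi (neg_neg_of_pos hb)]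
        field_simp

lemma norm_setIntegral_Ioi_rpow_mul_cexp_neg_le (κ : ℝ) {M : ℝ} (hM : 0 < M) {z : ℂ}
    (hz : |κ| / M < z.re) :
    ‖∫ t in Ioi M, ((t ^ κ : ℝ) : ℂ) * cexp (-(z * t))‖
      ≤ M ^ κ * Real.exp (-(M * z.re)) / (z.re - |κ| / M) := by
  have key := norm_setIntegral_Ioi_le_of_norm_le_exp (B := M ^ κ * Real.exp (-|κ|))
    (g := fun t : ℝ ↦ ((t ^ κ : ℝ) : ℂ) * cexp (-(z * t))) (a := M) (sub_pos.2 hz)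
    fun t ht ↦ by
      rw [norm_rpow_mul_cexp_neg κ z (hM.trans ht).le, mul_assoc, ← Real.exp_add]
      calc t ^ κ * Real.exp (-(z.re * t))
          ≤ M ^ κ * Real.exp (|κ| * (t / M - 1)) * Real.exp (-(z.re * t)) := by
            gcongr; exact rpow_le_rpow_mul_exp κ hM ht.le
        _ = M ^ κ * Real.exp (-|κ| + -(z.re - |κ| / M) * t) := by
            rw [mul_assoc, ← Real.exp_add]; congr 2; field_simp; ring
  refine key.trans_eq ?_
  rw [mul_assoc (M ^ κ), ← Real.exp_add]
  congr 3
  field_simp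
  ring

lemma intervalIntegral_cexp_mul_rpow_sub {κ : ℝ} (hκ : -1 < κ) {M : ℝ} (hM : 0 ≤ M) {z : ℂ}
    (hz : 0 < z.re) :
    ∫ α in (0 : ℝ)..M, cexp (α * z) * (((M - α) ^ κ : ℝ) : ℂ)
      = cexp (M * z) * (rpowLaplace κ z - ∫ t in Ioi M, ((t ^ κ : ℝ) : ℂ) * cexp (-(z * t))) := by
  have hint := integrableOn_rpow_mul_cexp_neg hκ hz
  have hsplit : rpowLaplace κ z = (∫ t in (0 : ℝ)..M, ((t ^ κ : ℝ) : ℂ) * cexp (-(z * t)))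
      + ∫ t in Ioi M, ((t ^ κ : ℝ) : ℂ) * cexp (-(z * t)) := by
    rw [rpowLaplace, integral_of_le hM, ← Ioc_union_Ioi_eq_Ioi hM,
      setIntegral_union (Ioc_disjoint_Ioi le_rfl) measurableSet_Ioi
        (hint.mono_set Ioc_subset_Ioi_self) (hint.mono_set (Ioi_subset_Ioi hM))]
  rw [hsplit, add_sub_cancel_right, ← intervalIntegral.integral_const_mul]
  calc ∫ α in (0 : ℝ)..M, cexp (α * z) * (((M - α) ^ κ : ℝ) : ℂ)
      = ∫ t in (0 : ℝ)..M, cexp ((M - t : ℝ) * z) * ((t ^ κ : ℝ) : ℂ) := by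
        simpa only [sub_sub_cancel, sub_zero, sub_self] using
          integral_comp_sub_left (a := 0) (b := M)
            (fun t : ℝ ↦ cexp ((M - t : ℝ) * z) * ((t ^ κ : ℝ) : ℂ)) M
    _ = ∫ t in (0 : ℝ)..M, cexp (M * z) * (((t ^ κ : ℝ) : ℂ) * cexp (-(z * t))) :=
        integral_congr fun t _ ↦ by
          rw [ofReal_sub, sub_mul, sub_eq_add_neg, exp_add, mul_comm z]
          ring

theorem stmt_3_general (M κ : ℝ) (hM0 : 0 < M) (hκ : -1 < κ) :
    ∃ C > 0, ∃ R₀ > 1, ∀ R ≥ R₀, ∀ θ ∈ Set.Icc (-Real.pi) Real.pi,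
      ‖(∫ α in (0:ℝ)..M,
            Complex.exp ((α : ℂ) * ((Real.log R : ℂ) + (θ : ℂ) * Complex.I))
              * (((M - α) ^ κ : ℝ) : ℂ))
          - (Real.Gamma (κ + 1) : ℂ)
              * Complex.exp ((M : ℂ) * ((Real.log R : ℂ) + (θ : ℂ) * Complex.I))
              / (((Real.log R : ℂ) + (θ : ℂ) * Complex.I) ^ ((κ : ℂ) + 1))‖
        ≤ C / Real.log R := by
  set c := |κ| / M
  refine ⟨2 * M ^ κ, by positivity, Real.exp (2 * c + 1), Real.one_lt_exp_iff.2 (by positivity),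
    fun R hR θ _ ↦ ?_⟩
  have hx : 2 * c + 1 ≤ Real.log R :=
    (Real.le_log_iff_exp_le ((Real.exp_pos _).trans_le hR)).2 hR
  set x := Real.log R
  set L : ℂ := x + θ * I
  have hL : L.re = x := by simp [L]
  have hc : 0 ≤ c := by positivity
  rw [intervalIntegral_cexp_mul_rpow_sub hκ hM0.le (by linarith), rpowLaplace_eq hκ (by linarith),
    show ∀ E T G P : ℂ, E * (G / P - T) - G * E / P = -(E * T) by intros; ring, norm_neg,
    norm_mul, norm_exp, re_ofReal_mul, hL]
  calc Real.exp (M * x) * ‖∫ t in Ioi M, ((t ^ κ : ℝ) : ℂ) * cexp (-(L * t))‖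
      ≤ Real.exp (M * x) * (M ^ κ * Real.exp (-(M * x)) / (x - c)) := by
        gcongr
        simpa only [hL] using norm_setIntegral_Ioi_rpow_mul_cexp_neg_le κ hM0 (z := L) (by linarith)
    _ = M ^ κ / (x - c) := by
        rw [mul_div_assoc', mul_left_comm, ← Real.exp_add, add_neg_cancel, Real.exp_zero, mul_one]
    _ ≤ M ^ κ / (x / 2) := by gcongr <;> linarith
    _ = 2 * M ^ κ / x := by ring

theorem stmt_3 (M κ : ℝ) (hM0 : 0 < M) (hM1 : M ≤ 1) (hκ : -1 < κ) :
    ∃ C > 0, ∃ R₀ > 1, ∀ R ≥ R₀, ∀ θ ∈ Set.Icc (-Real.pi) Real.pi,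
      ‖(∫ α in (0:ℝ)..M,
            Complex.exp ((α : ℂ) * ((Real.log R : ℂ) + (θ : ℂ) * Complex.I))
              * (((M - α) ^ κ : ℝ) : ℂ))
          - (Real.Gamma (κ + 1) : ℂ)
              * Complex.exp ((M : ℂ) * ((Real.log R : ℂ) + (θ : ℂ) * Complex.I))
              / (((Real.log R : ℂ) + (θ : ℂ) * Complex.I) ^ ((κ : ℂ) + 1))‖
        ≤ C / Real.log R :=
  stmt_3_general M κ hM0 hκ
end

section
/- Let n ≥ 1, let 0 ≤ α₁ < α₂ < ⋯ < αₙ ≤ 1, let a₁,…,aₙ, b₁,…,bₙ ≥ 0, and set μ_σ = Σᵢ aᵢ·δ_{αᵢ} and μ_ε = Σᵢ bᵢ·δ_{αᵢ} (Dirac measures on [0,1]). Then the thermodynamical restriction (T) holds for (μ_σ, μ_ε) if and only if aᵢ·bⱼ ≥ aⱼ·bᵢ for all 1 ≤ i < j ≤ n (i.e., the ratios aᵢ/bᵢ form a non-increasing chain a₁/b₁ ≥ a₂/b₂ ≥ ⋯ ≥ aₙ/bₙ, with the convention a/0 = ∞). -/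
open MeasureTheory Complex Set
open scoped ENNReal

/-- The thermodynamical restriction (T): the signed measure `μ_ε × μ_σ − μ_σ × μ_ε`
is nonnegative on the triangle `Δ = {(α,β) ∈ [0,1]² : α > β}`. -/
def TDrestriction (μσ με : Measure ℝ) : Prop :=
  ∀ E : Set (ℝ × ℝ), MeasurableSet E →
    E ⊆ {p : ℝ × ℝ | p.2 < p.1 ∧ p.1 ∈ Set.Icc (0:ℝ) 1 ∧ p.2 ∈ Set.Icc (0:ℝ) 1} →
    (μσ.prod με) E ≤ (με.prod μσ) E

/-! For atomic measures `μ_σ = ∑ cᵢ δ_{xᵢ}`, `μ_ε = ∑ dᵢ δ_{xᵢ}` both products are sums of point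
masses at the same points `(xᵢ, xⱼ)`, with weights `cᵢ dⱼ` and `dᵢ cⱼ`. Testing (T) on a single
point `(xᵢ, xⱼ)` of the triangle gives `cᵢ dⱼ ≤ dᵢ cⱼ`; conversely these inequalities compare the
two products atom by atom on any subset of the triangle. For increasing atoms, `(xᵢ, xⱼ)` lies in
the triangle exactly when `j < i`. -/

namespace MeasureTheory.Measure

variable {X Y ι κ : Type*} [MeasurableSpace X] [MeasurableSpace Y] [Fintype ι] [Fintype κ]

instance sFinite_finsetSum (μ : ι → Measure X) [∀ i, SFinite (μ i)] : SFinite (∑ i, μ i) := by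
  rw [← sum_fintype]
  infer_instance

lemma sum_smul_dirac_prod_sum_smul_dirac (c : ι → ℝ≥0∞) (x : ι → X) (d : κ → ℝ≥0∞)
    (y : κ → Y) :
    (∑ i, c i • dirac (x i)).prod (∑ j, d j • dirac (y j))
      = ∑ p : ι × κ, (c p.1 * d p.2) • dirac (x p.1, y p.2) := by
  simp_rw [← sum_fintype, prod_sum, prod_smul_left, prod_smul_right, dirac_prod_dirac, smul_smul]

lemma sum_smul_dirac_apply_singleton [MeasurableSingletonClass X] {x : ι → X}
    (hx : Function.Injective x) (c : ι → ℝ≥0∞) (k : ι) :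
    (∑ i, c i • dirac (x i)) {x k} = c k := by
  rw [finsetSum_apply, Finset.sum_eq_single k]
  · simp
  · intro i _ hik
    simp [hx.ne hik]
  · simp

end MeasureTheory.Measure

open Measure

theorem tdRestriction_sum_smul_dirac_iff {ι : Type*} [Fintype ι] {x : ι → ℝ}
    (hx : Function.Injective x) (c d : ι → ℝ≥0∞) :
    TDrestriction (∑ i, c i • dirac (x i)) (∑ i, d i • dirac (x i))
      ↔ ∀ i j, x j < x i → x i ∈ Icc 0 1 → x j ∈ Icc 0 1 → c i * d j ≤ d i * c j := by
  constructor
  · intro hT i j hji hi hj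
    have h := hT {(x i, x j)} (measurableSet_singleton _)
      (singleton_subset_iff.2 ⟨hji, hi, hj⟩)
    simpa only [← singleton_prod_singleton, prod_prod,
      sum_smul_dirac_apply_singleton hx] using h
  · intro hcd E hE hEΔ
    rw [sum_smul_dirac_prod_sum_smul_dirac, sum_smul_dirac_prod_sum_smul_dirac,
      finsetSum_apply, finsetSum_apply]
    refine Finset.sum_le_sum fun ⟨i, j⟩ _ => ?_
    by_cases hij : (x i, x j) ∈ E
    · obtain ⟨hji, hi, hj⟩ := hEΔ hij
      simpa [dirac_apply_of_mem hij] using hcd i j hji hi hj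
    · simp [dirac_apply' _ hE, hij]

theorem stmt_4_general (n : ℕ) (α : Fin n → ℝ) (hmono : StrictMono α)
    (hα0 : ∀ i, 0 ≤ α i) (hα1 : ∀ i, α i ≤ 1)
    (a b : Fin n → ℝ) (ha : ∀ i, 0 ≤ a i) (hb : ∀ i, 0 ≤ b i) :
    TDrestriction (∑ i, ENNReal.ofReal (a i) • Measure.dirac (α i))
                  (∑ i, ENNReal.ofReal (b i) • Measure.dirac (α i))
      ↔ ∀ i j : Fin n, i < j → a j * b i ≤ a i * b j := by
  have hIcc : ∀ i, α i ∈ Icc 0 1 := fun i => ⟨hα0 i, hα1 i⟩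
  rw [tdRestriction_sum_smul_dirac_iff hmono.injective]
  simp only [hmono.lt_iff_lt, hIcc, forall_const]
  refine forall_comm.trans (forall₂_congr fun i j => imp_congr_right fun _ => ?_)
  rw [← ENNReal.ofReal_mul (ha j), ← ENNReal.ofReal_mul (hb j),
    ENNReal.ofReal_le_ofReal_iff (mul_nonneg (hb j) (ha i)), mul_comm (b j)]

theorem stmt_4 (n : ℕ) (hn : 1 ≤ n) (α : Fin n → ℝ) (hmono : StrictMono α)
    (hα0 : ∀ i, 0 ≤ α i) (hα1 : ∀ i, α i ≤ 1)
    (a b : Fin n → ℝ) (ha : ∀ i, 0 ≤ a i) (hb : ∀ i, 0 ≤ b i) :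
    TDrestriction (∑ i, ENNReal.ofReal (a i) • Measure.dirac (α i))
                  (∑ i, ENNReal.ofReal (b i) • Measure.dirac (α i))
      ↔ ∀ i j : Fin n, i < j → a j * b i ≤ a i * b j :=
  stmt_4_general n α hmono hα0 hα1 a b ha hb
end

section
/- Let μ_σ and μ_ε be nonzero positive finite Borel measures on [0,1] satisfying the thermodynamical restriction (T). Then for every ω > 0: Φ_σ(iω) ≠ 0, and both the storage modulus and loss modulus are nonnegative, i.e., Re(Φ_ε(iω)/Φ_σ(iω)) ≥ 0 and Im(Φ_ε(iω)/Φ_σ(iω)) ≥ 0. -/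
open MeasureTheory Complex Set

/-!
For `s = iω` and `α ∈ [0,1]`, `s^α = ω^α e^{iαπ/2}` lies in the closed first quadrant, and so do
`Φ_σ(s)` and `Φ_ε(s)`; moreover `Re + Im` of the integrand is positive, so `Φ_σ(s) ≠ 0` as soon as
`μ_σ` charges `[0,1]`. This makes `Re(Φ_ε/Φ_σ)` a sum of products of nonnegative numbers.
For the imaginary part, `Im(Φ_ε · conj Φ_σ)` is the integral against `μ_ε × μ_σ` of the kernel
`K(α,β) = ω^{α+β} sin((α-β)π/2)`, which is antisymmetric and nonnegative on `α > β`; by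
antisymmetry the integral equals `∫_Δ K d(μ_ε × μ_σ) - ∫_Δ K d(μ_σ × μ_ε)`, which is `≥ 0` by (T).
-/

open scoped ComplexConjugate Real

lemma measurableSet_snd_lt_fst : MeasurableSet {p : ℝ × ℝ | p.2 < p.1} :=
  measurableSet_lt measurable_snd measurable_fst

lemma integral_prod_nonneg_of_antisymm {μ ν : Measure ℝ} [SFinite μ] [SFinite ν]
    {K : ℝ × ℝ → ℝ} (hK : Integrable K (μ.prod ν)) (hanti : ∀ p, K p.swap = -K p)
    (hpos : ∀ᵐ p ∂(μ.prod ν).restrict {p | p.2 < p.1}, 0 ≤ K p)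
    (hle : (ν.prod μ).restrict {p | p.2 < p.1} ≤ (μ.prod ν).restrict {p | p.2 < p.1}) :
    0 ≤ ∫ p, K p ∂(μ.prod ν) := by
  set Δ := {p : ℝ × ℝ | p.2 < p.1}
  have hdecomp : ∀ p, K p = Δ.indicator K p - Δ.indicator K p.swap := by
    rintro ⟨x, y⟩
    rcases lt_trichotomy x y with hxy | rfl | hxy
    · simp [Δ, hxy, hxy.not_gt, ← hanti (y, x)]
    · simp [Δ, eq_zero_of_neg_eq (hanti (x, x)).symm]
    · simp [Δ, hxy, hxy.not_gt]
  have hKΔ : Integrable (Δ.indicator K) (μ.prod ν) := hK.indicator measurableSet_snd_lt_fst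
  have hKΔswap : Integrable (fun p => Δ.indicator K p.swap) (μ.prod ν) :=
    (hKΔ.sub hK).congr (.of_forall fun p => by simp only [Pi.sub_apply, hdecomp p]; ring)
  calc (0 : ℝ) ≤ ∫ p in Δ, K p ∂(μ.prod ν) - ∫ p in Δ, K p ∂(ν.prod μ) :=
        sub_nonneg.2 (integral_mono_measure hle hpos hK.restrict)
    _ = ∫ p, K p ∂(μ.prod ν) := by
        rw [← integral_indicator measurableSet_snd_lt_fst,
          ← integral_indicator measurableSet_snd_lt_fst, ← integral_prod_swap (μ := ν) (ν := μ),
          ← integral_sub hKΔ hKΔswap]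
        exact integral_congr_ae (.of_forall fun p => (hdecomp p).symm)

lemma im_integral_mul_conj_integral_nonneg {μ ν : Measure ℝ} [SFinite μ] [SFinite ν]
    {f : ℝ → ℂ} (hfμ : Integrable f μ) (hfν : Integrable f ν)
    (hpos : ∀ᵐ p ∂(μ.prod ν).restrict {p | p.2 < p.1}, 0 ≤ (f p.1 * conj (f p.2)).im)
    (hle : (ν.prod μ).restrict {p | p.2 < p.1} ≤ (μ.prod ν).restrict {p | p.2 < p.1}) :
    0 ≤ ((∫ x, f x ∂μ) * conj (∫ x, f x ∂ν)).im := by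
  have hint : Integrable (fun p : ℝ × ℝ => f p.1 * conj (f p.2)) (μ.prod ν) :=
    hfμ.mul_prod ((conjCLE : ℂ →L[ℝ] ℂ).integrable_comp hfν)
  rw [← integral_conj, ← integral_prod_mul, ← RCLike.im_to_complex, ← integral_im hint]
  refine integral_prod_nonneg_of_antisymm hint.im (fun p => ?_) hpos hle
  simp only [RCLike.im_to_complex, Prod.fst_swap, Prod.snd_swap, mul_im, conj_re, conj_im]
  ring

lemma TDrestriction.prod_restrict_le {μσ με : Measure ℝ} [SFinite μσ] [SFinite με]
    (hT : TDrestriction μσ με) :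
    ((μσ.restrict (Icc 0 1)).prod (με.restrict (Icc 0 1))).restrict {p | p.2 < p.1}
      ≤ ((με.restrict (Icc 0 1)).prod (μσ.restrict (Icc 0 1))).restrict {p | p.2 < p.1} := by
  refine Measure.le_iff.2 fun t ht => ?_
  have htΔ := ht.inter measurableSet_snd_lt_fst
  simp only [Measure.restrict_apply ht, Measure.prod_restrict, Measure.restrict_apply htΔ]
  exact hT _ (htΔ.inter (measurableSet_Icc.prod measurableSet_Icc))
    fun p ⟨⟨_, hp⟩, h1, h2⟩ => ⟨hp, h1, h2⟩

section cpow

variable {s : ℂ} {α β : ℝ}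

lemma re_cpow_ofReal_nonneg (h0 : 0 ≤ arg s) (h1 : arg s ≤ π / 2) (hα : α ∈ Icc (0 : ℝ) 1) :
    0 ≤ (s ^ (α : ℂ)).re := by
  rw [cpow_ofReal_re]
  exact mul_nonneg (by positivity)
    (Real.cos_nonneg_of_mem_Icc ⟨by nlinarith [Real.pi_pos, hα.1], by nlinarith [hα.2]⟩)

lemma im_cpow_ofReal_nonneg (h0 : 0 ≤ arg s) (h1 : arg s ≤ π / 2) (hα : α ∈ Icc (0 : ℝ) 1) :
    0 ≤ (s ^ (α : ℂ)).im := by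
  rw [cpow_ofReal_im]
  exact mul_nonneg (by positivity)
    (Real.sin_nonneg_of_nonneg_of_le_pi (by nlinarith [hα.1]) (by nlinarith [hα.2]))

lemma re_add_im_cpow_ofReal_pos (hs : s ≠ 0) (h0 : 0 ≤ arg s) (h1 : arg s ≤ π / 2)
    (hα : α ∈ Icc (0 : ℝ) 1) : 0 < (s ^ (α : ℂ)).re + (s ^ (α : ℂ)).im := by
  have hc := Real.cos_nonneg_of_mem_Icc
    (x := arg s * α) ⟨by nlinarith [Real.pi_pos, hα.1], by nlinarith [hα.2]⟩
  have hs' := Real.sin_nonneg_of_nonneg_of_le_pi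
    (x := arg s * α) (by nlinarith [hα.1]) (by nlinarith [hα.2])
  rw [cpow_ofReal_re, cpow_ofReal_im, ← mul_add]
  exact mul_pos (by positivity) (by nlinarith [Real.sin_sq_add_cos_sq (arg s * α)])

lemma im_cpow_ofReal_mul_conj_nonneg (h0 : 0 ≤ arg s) (hβα : β ≤ α) (hα : α ≤ 1) (hβ : 0 ≤ β) :
    0 ≤ (s ^ (α : ℂ) * conj (s ^ (β : ℂ))).im := by
  have hsin : (s ^ (α : ℂ) * conj (s ^ (β : ℂ))).im
      = ‖s‖ ^ α * ‖s‖ ^ β * Real.sin (arg s * (α - β)) := by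
    rw [mul_im, conj_re, conj_im, cpow_ofReal_re, cpow_ofReal_re, cpow_ofReal_im,
      cpow_ofReal_im, mul_sub, Real.sin_sub]
    ring
  rw [hsin]
  exact mul_nonneg (by positivity) (Real.sin_nonneg_of_nonneg_of_le_pi
    (by nlinarith) (by nlinarith [arg_le_pi s, Real.pi_pos]))

end cpow

section Phi

variable {s : ℂ}

lemma integrableOn_cpow_ofReal_Icc (μ : Measure ℝ) [IsFiniteMeasure μ] (hs : s ≠ 0) :
    IntegrableOn (fun α : ℝ => s ^ (α : ℂ)) (Icc 0 1) μ :=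
  (continuous_ofReal.const_cpow (Or.inl hs)).integrableOn_Icc

lemma re_Phi (μ : Measure ℝ) [IsFiniteMeasure μ] (hs : s ≠ 0) :
    (Phi μ s).re = ∫ α in Icc 0 1, (s ^ (α : ℂ)).re ∂μ :=
  (integral_re (integrableOn_cpow_ofReal_Icc μ hs)).symm

lemma im_Phi (μ : Measure ℝ) [IsFiniteMeasure μ] (hs : s ≠ 0) :
    (Phi μ s).im = ∫ α in Icc 0 1, (s ^ (α : ℂ)).im ∂μ :=
  (integral_im (integrableOn_cpow_ofReal_Icc μ hs)).symm

variable {μ : Measure ℝ} [IsFiniteMeasure μ]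

lemma re_Phi_nonneg (hs : s ≠ 0) (h0 : 0 ≤ arg s) (h1 : arg s ≤ π / 2) : 0 ≤ (Phi μ s).re := by
  rw [re_Phi μ hs]
  exact setIntegral_nonneg measurableSet_Icc fun α hα => re_cpow_ofReal_nonneg h0 h1 hα

lemma im_Phi_nonneg (hs : s ≠ 0) (h0 : 0 ≤ arg s) (h1 : arg s ≤ π / 2) : 0 ≤ (Phi μ s).im := by
  rw [im_Phi μ hs]
  exact setIntegral_nonneg measurableSet_Icc fun α hα => im_cpow_ofReal_nonneg h0 h1 hα

lemma Phi_ne_zero (hs : s ≠ 0) (h0 : 0 ≤ arg s) (h1 : arg s ≤ π / 2) (hμ : μ (Icc 0 1) ≠ 0) :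
    Phi μ s ≠ 0 := by
  have hre : IntegrableOn (fun α : ℝ => (s ^ (α : ℂ)).re) (Icc 0 1) μ :=
    (integrableOn_cpow_ofReal_Icc μ hs).re
  have him : IntegrableOn (fun α : ℝ => (s ^ (α : ℂ)).im) (Icc 0 1) μ :=
    (integrableOn_cpow_ofReal_Icc μ hs).im
  have hpos : 0 < (Phi μ s).re + (Phi μ s).im := by
    rw [re_Phi μ hs, im_Phi μ hs, ← integral_add hre him,
      setIntegral_pos_iff_support_of_nonneg_ae
        ((ae_restrict_mem measurableSet_Icc).mono fun α hα =>
          (re_add_im_cpow_ofReal_pos hs h0 h1 hα).le) (hre.add him)]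
    exact (pos_iff_ne_zero.2 hμ).trans_le
      (measure_mono fun α hα => ⟨(re_add_im_cpow_ofReal_pos hs h0 h1 hα).ne', hα⟩)
  rintro h
  simp [h] at hpos

end Phi

lemma im_Phi_mul_conj_Phi_nonneg {μσ με : Measure ℝ} [IsFiniteMeasure μσ] [IsFiniteMeasure με]
    {s : ℂ} (hs : s ≠ 0) (h0 : 0 ≤ arg s) (hT : TDrestriction μσ με) :
    0 ≤ (Phi με s * conj (Phi μσ s)).im := by
  refine im_integral_mul_conj_integral_nonneg (integrableOn_cpow_ofReal_Icc με hs)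
    (integrableOn_cpow_ofReal_Icc μσ hs) ?_ hT.prod_restrict_le
  rw [Measure.prod_restrict, Measure.restrict_restrict measurableSet_snd_lt_fst]
  filter_upwards [ae_restrict_mem
    (measurableSet_snd_lt_fst.inter (measurableSet_Icc.prod measurableSet_Icc))]
    with p ⟨hp, ⟨_, hp1⟩, ⟨hp2, _⟩⟩
  exact im_cpow_ofReal_mul_conj_nonneg h0 hp.le hp1 hp2

theorem stmt_5_general (μσ με : Measure ℝ) [IsFiniteMeasure μσ] [IsFiniteMeasure με]
    (hσ : μσ ≠ 0)
    (hσsupp : μσ (Set.Icc (0:ℝ) 1)ᶜ = 0)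
    (hT : TDrestriction μσ με) :
    ∀ ω : ℝ, 0 < ω →
      Phi μσ ((ω : ℂ) * Complex.I) ≠ 0
      ∧ 0 ≤ (Phi με ((ω : ℂ) * Complex.I) / Phi μσ ((ω : ℂ) * Complex.I)).re
      ∧ 0 ≤ (Phi με ((ω : ℂ) * Complex.I) / Phi μσ ((ω : ℂ) * Complex.I)).im := by
  intro ω hω
  set s : ℂ := ω * I
  have hs : s ≠ 0 := mul_ne_zero (ofReal_ne_zero.2 hω.ne') I_ne_zero
  have harg : arg s = π / 2 := by rw [arg_real_mul _ hω, arg_I]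
  have h0 : 0 ≤ arg s := harg ▸ by positivity
  have h1 : arg s ≤ π / 2 := harg.le
  have hμσ : μσ (Icc 0 1) ≠ 0 := fun h =>
    hσ (Measure.measure_univ_eq_zero.1 (by simpa using measure_union_null h hσsupp))
  refine ⟨Phi_ne_zero hs h0 h1 hμσ, ?_, ?_⟩
  · rw [div_re]
    exact add_nonneg
      (div_nonneg (mul_nonneg (re_Phi_nonneg hs h0 h1) (re_Phi_nonneg hs h0 h1)) (normSq_nonneg _))
      (div_nonneg (mul_nonneg (im_Phi_nonneg hs h0 h1) (im_Phi_nonneg hs h0 h1)) (normSq_nonneg _))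
  · have := im_Phi_mul_conj_Phi_nonneg hs h0 hT
    rw [mul_im, conj_re, conj_im] at this
    rw [div_im, div_sub_div_same]
    exact div_nonneg (by linarith) (normSq_nonneg _)

theorem stmt_5 (μσ με : Measure ℝ) [IsFiniteMeasure μσ] [IsFiniteMeasure με]
    (hσ : μσ ≠ 0) (hε : με ≠ 0)
    (hσsupp : μσ (Set.Icc (0:ℝ) 1)ᶜ = 0) (hεsupp : με (Set.Icc (0:ℝ) 1)ᶜ = 0)
    (hT : TDrestriction μσ με) :
    ∀ ω : ℝ, 0 < ω →
      Phi μσ ((ω : ℂ) * Complex.I) ≠ 0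
      ∧ 0 ≤ (Phi με ((ω : ℂ) * Complex.I) / Phi μσ ((ω : ℂ) * Complex.I)).re
      ∧ 0 ≤ (Phi με ((ω : ℂ) * Complex.I) / Phi μσ ((ω : ℂ) * Complex.I)).im :=
  stmt_5_general μσ με hσ hσsupp hT
end

section
/- Let μ_σ and μ_ε be nonzero positive finite Borel measures on [0,1] satisfying the thermodynamical restriction (T) and forming a proper fractional model (i.e., μ_σ((0,1)) > 0 or μ_ε((0,1)) > 0). Then for every R > 0 and every θ ∈ [−π,π]: ∫₀¹ R^α e^{iαθ} dμ_σ(α) ≠ 0 and ∫₀¹ R^α e^{iαθ} dμ_ε(α) ≠ 0. (In particular Φ_σ and Φ_ε do not vanish on either side of the branch cut, so s = 0 and s = ∞ are the only possible branch points of √(Φ_σ/Φ_ε).) -/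
open MeasureTheory Complex Set

/-!
Multiplying by `e^{-iθ/2}` centres the phases `αθ`, `α ∈ [0,1]`, around `0`: the real part of
`e^{-iθ/2} Φ(Re^{iθ})` is `∫ R^α cos((α - 1/2)θ) dμ`, whose integrand is nonnegative for
`|θ| ≤ π` and positive where `|θ| < π` or `0 < α < 1`. Hence `Φ` can only vanish at `θ = ±π`
for a measure carried by `{0, 1}`, where `Φ = μ{0} - R μ{1}`. For such a `μσ`, the proper
model gives `με(0,1) > 0`, and (T) tested on `{1} × (0,1)` gives `μσ{1} = 0`, so `Φσ = μσ{0} > 0`;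
symmetrically (T) on `(0,1) × {0}` kills the atom of `με` at `0`.
-/

open scoped Real

noncomputable def phiKernel (R θ α : ℝ) : ℂ :=
  ((R ^ α : ℝ) : ℂ) * Complex.exp ((α * θ : ℝ) * Complex.I)

lemma phiP_eq_integral_phiKernel (μ : Measure ℝ) (R θ : ℝ) :
    PhiP μ R θ = ∫ α in Icc (0:ℝ) 1, phiKernel R θ α ∂μ := rfl

lemma continuous_phiKernel {R : ℝ} (hR : 0 < R) (θ : ℝ) : Continuous (phiKernel R θ) := by
  unfold phiKernel
  have := hR.ne'
  fun_prop (disch := exact Or.inl this)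

lemma re_phiKernel_mul_exp (R θ α : ℝ) :
    (phiKernel R θ α * Complex.exp ((-(θ / 2) : ℝ) * Complex.I)).re
      = R ^ α * Real.cos ((α - 1 / 2) * θ) := by
  rw [phiKernel, mul_assoc, ← Complex.exp_add, ← add_mul, ← Complex.ofReal_add,
    Complex.re_ofReal_mul, Complex.exp_ofReal_mul_I_re]
  ring_nf

lemma abs_sub_half_mul_le {α θ : ℝ} (hα : α ∈ Icc (0:ℝ) 1) (hθ : |θ| ≤ π) :
    |(α - 1 / 2) * θ| ≤ π / 2 := by
  have : |α - 1 / 2| ≤ 1 / 2 := abs_le.2 ⟨by linarith [hα.1], by linarith [hα.2]⟩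
  rw [abs_mul]
  nlinarith [abs_nonneg θ, abs_nonneg (α - 1 / 2)]

lemma abs_sub_half_mul_lt {α θ : ℝ} (hα : α ∈ Icc (0:ℝ) 1) (hθ : |θ| ≤ π)
    (h : α ∈ Ioo (0:ℝ) 1 ∨ |θ| < π) : |(α - 1 / 2) * θ| < π / 2 := by
  have : |α - 1 / 2| ≤ 1 / 2 := abs_le.2 ⟨by linarith [hα.1], by linarith [hα.2]⟩
  rw [abs_mul]
  rcases h with h | h
  · have : |α - 1 / 2| < 1 / 2 := abs_lt.2 ⟨by linarith [h.1], by linarith [h.2]⟩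
    nlinarith [abs_nonneg θ, abs_nonneg (α - 1 / 2), Real.pi_pos]
  · nlinarith [abs_nonneg θ, abs_nonneg (α - 1 / 2)]

lemma cos_sub_half_mul_nonneg {α θ : ℝ} (hα : α ∈ Icc (0:ℝ) 1) (hθ : |θ| ≤ π) :
    0 ≤ Real.cos ((α - 1 / 2) * θ) := by
  obtain ⟨hl, hu⟩ := abs_le.1 (abs_sub_half_mul_le hα hθ)
  exact Real.cos_nonneg_of_neg_pi_div_two_le_of_le hl hu

lemma cos_sub_half_mul_pos {α θ : ℝ} (hα : α ∈ Icc (0:ℝ) 1) (hθ : |θ| ≤ π)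
    (h : α ∈ Ioo (0:ℝ) 1 ∨ |θ| < π) : 0 < Real.cos ((α - 1 / 2) * θ) :=
  Real.cos_pos_of_mem_Ioo (abs_lt.1 (abs_sub_half_mul_lt hα hθ h))

lemma measure_pos_of_compl_eq_zero {X : Type*} [MeasurableSpace X] {μ : Measure X} {s : Set X}
    (hμ : μ ≠ 0) (hs : μ sᶜ = 0) : 0 < μ s := by
  rw [measure_congr (ae_eq_univ.2 hs)]
  exact (Measure.measure_univ_ne_zero.2 hμ).bot_lt

lemma Icc_ae_eq_pair_of_measure_Ioo_eq_zero {ν : Measure ℝ} {a b : ℝ} (hab : a ≤ b)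
    (hIoo : ν (Ioo a b) = 0) : Icc a b =ᵐ[ν] ({a, b} : Set ℝ) := by
  rw [← Icc_sdiff_Ioo_same hab]
  exact (sdiff_null_ae_eq_self hIoo).symm

section

variable {μ : Measure ℝ} [IsFiniteMeasureOnCompacts μ] {R θ : ℝ}

lemma integrableOn_phiKernel (hR : 0 < R) (θ : ℝ) : IntegrableOn (phiKernel R θ) (Icc 0 1) μ :=
  (continuous_phiKernel hR θ).continuousOn.integrableOn_compact isCompact_Icc

lemma phiP_ne_zero_of_measure_cos_pos (hR : 0 < R) (hθ : |θ| ≤ π)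
    (hpos : 0 < μ {α ∈ Icc (0:ℝ) 1 | 0 < Real.cos ((α - 1 / 2) * θ)}) :
    PhiP μ R θ ≠ 0 := by
  have hre : (PhiP μ R θ * Complex.exp ((-(θ / 2) : ℝ) * Complex.I)).re
      = ∫ α in Icc (0:ℝ) 1, R ^ α * Real.cos ((α - 1 / 2) * θ) ∂μ := by
    rw [phiP_eq_integral_phiKernel, ← integral_mul_const, ← Complex.reCLM_apply,
      ← (Complex.reCLM).integral_comp_comm ((integrableOn_phiKernel hR θ).mul_const _)]
    simp only [Complex.reCLM_apply, re_phiKernel_mul_exp]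
  have hcont : Continuous fun α : ℝ => R ^ α * Real.cos ((α - 1 / 2) * θ) := by
    have := hR.ne'
    fun_prop (disch := exact Or.inl this)
  have hpos_int : 0 < ∫ α in Icc (0:ℝ) 1, R ^ α * Real.cos ((α - 1 / 2) * θ) ∂μ := by
    rw [setIntegral_pos_iff_support_of_nonneg_ae _
      (hcont.continuousOn.integrableOn_compact isCompact_Icc)]
    · refine hpos.trans_le (measure_mono fun α ⟨hα, hcos⟩ => ⟨?_, hα⟩)
      exact (mul_pos (Real.rpow_pos_of_pos hR α) hcos).ne'
    · filter_upwards [ae_restrict_mem measurableSet_Icc] with α hα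
      exact mul_nonneg (Real.rpow_nonneg hR.le α) (cos_sub_half_mul_nonneg hα hθ)
  intro h
  rw [← hre, h, zero_mul, Complex.zero_re] at hpos_int
  exact hpos_int.false

lemma phiP_of_abs_eq_pi (hR : 0 < R) (hθ : |θ| = π) (hIoo : μ (Ioo (0:ℝ) 1) = 0) :
    PhiP μ R θ = μ.real {0} - μ.real {1} * R := by
  have hpair : Icc (0:ℝ) 1 =ᵐ[μ] ((({0, 1} : Finset ℝ)) : Set ℝ) := by
    rw [Finset.coe_pair]
    exact Icc_ae_eq_pair_of_measure_Ioo_eq_zero zero_le_one hIoo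
  have hexp : Complex.exp ((θ : ℂ) * Complex.I) = -1 := by
    rcases abs_eq Real.pi_pos.le |>.1 hθ with rfl | rfl
    · exact Complex.exp_pi_mul_I
    · rw [Complex.ofReal_neg, neg_mul, Complex.exp_neg_pi_mul_I]
  rw [phiP_eq_integral_phiKernel, setIntegral_congr_set hpair,
    setIntegral_finset _ ((integrableOn_phiKernel hR θ).congr_set_ae hpair.symm)]
  simp only [phiKernel, ofReal_mul, real_smul, Finset.mem_singleton, zero_ne_one,
    not_false_eq_true, Finset.sum_insert, Real.rpow_zero, ofReal_one, ofReal_zero, zero_mul,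
    exp_zero, mul_one, Finset.sum_singleton, Real.rpow_one, one_mul, hexp, mul_neg]
  ring

lemma phiP_ne_zero_of_abs_eq_pi (hR : 0 < R) (hθ : |θ| = π) (hIoo : μ (Ioo (0:ℝ) 1) = 0)
    (hIcc : 0 < μ (Icc (0:ℝ) 1)) (h : μ {0} = 0 ∨ μ {1} = 0) : PhiP μ R θ ≠ 0 := by
  have hmass : μ (Icc (0:ℝ) 1) ≤ μ {0} + μ {1} := by
    rw [measure_congr (Icc_ae_eq_pair_of_measure_Ioo_eq_zero zero_le_one hIoo), insert_eq]
    exact measure_union_le _ _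
  have hatom (x : ℝ) (hx : 0 < μ {x}) : μ.real {x} ≠ 0 :=
    (measureReal_ne_zero_iff isCompact_singleton.measure_ne_top).2 hx.ne'
  suffices μ.real {0} - μ.real {1} * R ≠ 0 by
    rw [phiP_of_abs_eq_pi hR hθ hIoo]
    exact_mod_cast this
  rcases h with h0 | h1
  · rw [h0, zero_add] at hmass
    simp only [Measure.real, h0, ENNReal.toReal_zero, zero_sub, neg_ne_zero]
    exact mul_ne_zero (hatom 1 (hIcc.trans_le hmass)) hR.ne'
  · rw [h1, add_zero] at hmass
    simpa only [Measure.real, h1, ENNReal.toReal_zero, zero_mul, sub_zero]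
      using hatom 0 (hIcc.trans_le hmass)

lemma phiP_ne_zero_of_abs_le_pi (hR : 0 < R) (hθ : |θ| ≤ π) (hIcc : 0 < μ (Icc (0:ℝ) 1))
    (h : 0 < μ (Ioo (0:ℝ) 1) ∨ μ {0} = 0 ∨ μ {1} = 0) : PhiP μ R θ ≠ 0 := by
  rcases hθ.lt_or_eq with hlt | hπ
  · refine phiP_ne_zero_of_measure_cos_pos hR hθ (hIcc.trans_le (measure_mono fun α hα => ?_))
    exact ⟨hα, cos_sub_half_mul_pos hα hθ (Or.inr hlt)⟩
  rcases eq_zero_or_pos (μ (Ioo (0:ℝ) 1)) with hIoo | hIoo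
  · exact phiP_ne_zero_of_abs_eq_pi hR hπ hIoo hIcc (h.resolve_left hIoo.not_gt)
  · refine phiP_ne_zero_of_measure_cos_pos hR hθ (hIoo.trans_le (measure_mono fun α hα => ?_))
    exact ⟨Ioo_subset_Icc_self hα, cos_sub_half_mul_pos (Ioo_subset_Icc_self hα) hθ (Or.inl hα)⟩

end

namespace TDrestriction

variable {μσ με : Measure ℝ} [SFinite μσ] [SFinite με]

lemma measure_one_eq_zero (hT : TDrestriction μσ με) (hσ : μσ (Ioo (0:ℝ) 1) = 0)
    (hε : 0 < με (Ioo (0:ℝ) 1)) : μσ {1} = 0 := by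
  have h := hT ({1} ×ˢ Ioo 0 1) ((measurableSet_singleton 1).prod measurableSet_Ioo)
    (by rintro ⟨_, y⟩ ⟨rfl, hy⟩; exact ⟨hy.2, right_mem_Icc.2 zero_le_one, Ioo_subset_Icc_self hy⟩)
  rw [Measure.prod_prod, Measure.prod_prod, hσ, mul_zero, nonpos_iff_eq_zero, mul_eq_zero] at h
  exact h.resolve_right hε.ne'

lemma measure_zero_eq_zero (hT : TDrestriction μσ με) (hε : με (Ioo (0:ℝ) 1) = 0)
    (hσ : 0 < μσ (Ioo (0:ℝ) 1)) : με {0} = 0 := by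
  have h := hT (Ioo 0 1 ×ˢ {0}) (measurableSet_Ioo.prod (measurableSet_singleton 0))
    (by rintro ⟨x, _⟩ ⟨hx, rfl⟩; exact ⟨hx.1, Ioo_subset_Icc_self hx, left_mem_Icc.2 zero_le_one⟩)
  rw [Measure.prod_prod, Measure.prod_prod, hε, zero_mul, nonpos_iff_eq_zero, mul_eq_zero] at h
  exact h.resolve_left hσ.ne'

end TDrestriction

theorem stmt_7 (μσ με : Measure ℝ) [IsFiniteMeasure μσ] [IsFiniteMeasure με]
    (hσ : μσ ≠ 0) (hε : με ≠ 0)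
    (hσsupp : μσ (Set.Icc (0:ℝ) 1)ᶜ = 0) (hεsupp : με (Set.Icc (0:ℝ) 1)ᶜ = 0)
    (hT : TDrestriction μσ με)
    (hproper : 0 < μσ (Set.Ioo (0:ℝ) 1) ∨ 0 < με (Set.Ioo (0:ℝ) 1)) :
    ∀ R : ℝ, 0 < R → ∀ θ ∈ Set.Icc (-Real.pi) Real.pi,
      PhiP μσ R θ ≠ 0 ∧ PhiP με R θ ≠ 0 := by
  intro R hR θ hθ
  have hθ' : |θ| ≤ π := abs_le.2 hθ
  constructor
  · refine phiP_ne_zero_of_abs_le_pi hR hθ' (measure_pos_of_compl_eq_zero hσ hσsupp) ?_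
    rcases eq_zero_or_pos (μσ (Ioo (0:ℝ) 1)) with hσIoo | hσIoo
    · exact Or.inr (Or.inr (hT.measure_one_eq_zero hσIoo (hproper.resolve_left hσIoo.not_gt)))
    · exact Or.inl hσIoo
  · refine phiP_ne_zero_of_abs_le_pi hR hθ' (measure_pos_of_compl_eq_zero hε hεsupp) ?_
    rcases eq_zero_or_pos (με (Ioo (0:ℝ) 1)) with hεIoo | hεIoo
    · exact Or.inr (Or.inl (hT.measure_zero_eq_zero hεIoo (hproper.resolve_right hεIoo.not_gt)))
    · exact Or.inl hεIoo
end

section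
/- Let μ_σ and μ_ε be nonzero positive finite Borel measures on [0,1] satisfying the thermodynamical restriction (T). Then M_σ := max supp μ_σ ≤ M_ε := max supp μ_ε. Moreover, if M_σ = M_ε = M and μ_σ({M}) > 0, then also μ_ε({M}) > 0. -/
open MeasureTheory Complex Set

lemma aux_pos_Icc (μ : Measure ℝ) (hμ : μ ≠ 0) (M : ℝ)
    (hsupp : μ (Set.Icc (0:ℝ) 1)ᶜ = 0) (hIoi : μ (Set.Ioi M) = 0) :
    0 < μ (Set.Icc 0 M) := by
  have hcov : (Set.univ : Set ℝ) ⊆ Set.Icc 0 M ∪ (Set.Ioi M ∪ (Set.Icc (0:ℝ) 1)ᶜ) := by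
    intro x _
    by_cases hx : x ∈ Set.Icc (0:ℝ) 1
    · by_cases hxM : x ≤ M
      · exact Or.inl ⟨hx.1, hxM⟩
      · exact Or.inr (Or.inl (lt_of_not_ge hxM))
    · exact Or.inr (Or.inr hx)
  have h1 : μ Set.univ ≤ μ (Set.Icc 0 M) + (μ (Set.Ioi M) + μ ((Set.Icc (0:ℝ) 1)ᶜ)) :=
    (measure_mono hcov).trans <| (measure_union_le _ _).trans <| by
      gcongr; exact measure_union_le _ _
  rw [hIoi, hsupp] at h1
  simp only [add_zero] at h1
  have := Measure.measure_univ_ne_zero.mpr hμ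
  exact lt_of_lt_of_le (pos_iff_ne_zero.mpr this) h1

lemma aux_pos_Ico (μ : Measure ℝ) (hμ : μ ≠ 0) (M : ℝ)
    (hsupp : μ (Set.Icc (0:ℝ) 1)ᶜ = 0) (hIoi : μ (Set.Ioi M) = 0) (hM : μ {M} = 0) :
    0 < μ (Set.Ico 0 M) := by
  have hcov : (Set.univ : Set ℝ) ⊆ Set.Ico 0 M ∪ ({M} ∪ (Set.Ioi M ∪ (Set.Icc (0:ℝ) 1)ᶜ)) := by
    intro x _
    by_cases hx : x ∈ Set.Icc (0:ℝ) 1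
    · rcases lt_trichotomy x M with h | h | h
      · exact Or.inl ⟨hx.1, h⟩
      · exact Or.inr (Or.inl h)
      · exact Or.inr (Or.inr (Or.inl h))
    · exact Or.inr (Or.inr (Or.inr hx))
  have h1 : μ Set.univ ≤ μ (Set.Ico 0 M) + (μ {M} + (μ (Set.Ioi M) + μ ((Set.Icc (0:ℝ) 1)ᶜ))) :=
    (measure_mono hcov).trans <| (measure_union_le _ _).trans <| by
      gcongr
      exact (measure_union_le _ _).trans <| by gcongr; exact measure_union_le _ _
  rw [hIoi, hsupp, hM] at h1
  simp only [add_zero, zero_add] at h1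
  have := Measure.measure_univ_ne_zero.mpr hμ
  exact lt_of_lt_of_le (pos_iff_ne_zero.mpr this) h1

theorem stmt_8 (μσ με : Measure ℝ) [IsFiniteMeasure μσ] [IsFiniteMeasure με]
    (hσ : μσ ≠ 0) (hε : με ≠ 0)
    (hσsupp : μσ (Set.Icc (0:ℝ) 1)ᶜ = 0) (hεsupp : με (Set.Icc (0:ℝ) 1)ᶜ = 0)
    (hT : TDrestriction μσ με)
    (Mσ Mε : ℝ) (hMσ : IsMaxSupport μσ Mσ) (hMε : IsMaxSupport με Mε) :
    Mσ ≤ Mε ∧ (Mσ = Mε → 0 < μσ {Mσ} → 0 < με {Mε}) := by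
  obtain ⟨⟨hσ0, hσ1⟩, hσIoi, hσnbd⟩ := hMσ
  obtain ⟨⟨hε0, hε1⟩, hεIoi, hεnbd⟩ := hMε
  constructor
  · by_contra hlt
    push_neg at hlt
    set m := (Mε + Mσ) / 2 with hm
    have hm1 : Mε < m := by simp [hm]; linarith
    have hm2 : m < Mσ := by simp [hm]; linarith
    have hE : MeasurableSet ((Set.Icc m 1) ×ˢ (Set.Icc (0:ℝ) Mε)) :=
      measurableSet_Icc.prod measurableSet_Icc
    have hsub : (Set.Icc m 1) ×ˢ (Set.Icc (0:ℝ) Mε) ⊆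
        {p : ℝ × ℝ | p.2 < p.1 ∧ p.1 ∈ Set.Icc (0:ℝ) 1 ∧ p.2 ∈ Set.Icc (0:ℝ) 1} := by
      rintro ⟨a, b⟩ ⟨⟨ha1, ha2⟩, ⟨hb1, hb2⟩⟩
      refine ⟨lt_of_le_of_lt hb2 (lt_of_lt_of_le hm1 ha1), ⟨by linarith, ha2⟩, hb1, by linarith⟩
    have key := hT _ hE hsub
    rw [Measure.prod_prod, Measure.prod_prod] at key
    have hεm : με (Set.Icc m 1) = 0 :=
      measure_mono_null (fun x hx => lt_of_lt_of_le hm1 hx.1) hεIoi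
    rw [hεm, zero_mul] at key
    have hσm : 0 < μσ (Set.Icc m 1) := by
      refine lt_of_lt_of_le ?_ (measure_mono (Set.Icc_subset_Icc le_rfl hσ1))
      have := hσnbd (Mσ - m) (by linarith)
      simpa using this
    have hεtot : 0 < με (Set.Icc 0 Mε) := aux_pos_Icc με hε Mε hεsupp hεIoi
    exact absurd key (not_le.mpr (ENNReal.mul_pos hσm.ne' hεtot.ne'))
  · intro heq hσM
    by_contra hεM
    have hεM0 : με {Mε} = 0 := by simpa [pos_iff_ne_zero] using hεM
    by_cases hM0 : Mε = 0
    · have : 0 < με (Set.Icc 0 Mε) := aux_pos_Icc με hε Mε hεsupp hεIoi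
      rw [hM0] at this hεM0
      simp only [Set.Icc_self] at this
      exact absurd hεM0 this.ne'
    · have hMpos : 0 < Mε := lt_of_le_of_ne hε0 (Ne.symm hM0)
      have hE : MeasurableSet (({Mε} : Set ℝ) ×ˢ Set.Ico (0:ℝ) Mε) :=
        (measurableSet_singleton _).prod measurableSet_Ico
      have hsub : ({Mε} : Set ℝ) ×ˢ Set.Ico (0:ℝ) Mε ⊆
          {p : ℝ × ℝ | p.2 < p.1 ∧ p.1 ∈ Set.Icc (0:ℝ) 1 ∧ p.2 ∈ Set.Icc (0:ℝ) 1} := by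
        rintro ⟨a, b⟩ ⟨ha, ⟨hb1, hb2⟩⟩
        simp only [Set.mem_singleton_iff] at ha
        subst ha
        exact ⟨hb2, ⟨hε0, hε1⟩, hb1, by linarith⟩
      have key := hT _ hE hsub
      rw [Measure.prod_prod, Measure.prod_prod, hεM0, zero_mul] at key
      have hεIco : 0 < με (Set.Ico 0 Mε) := aux_pos_Ico με hε Mε hεsupp hεIoi hεM0
      have hσM' : 0 < μσ {Mε} := heq ▸ hσM
      exact absurd key (not_le.mpr (ENNReal.mul_pos hσM'.ne' hεIco.ne'))
end

section
/- Let μ_σ and μ_ε be nonzero positive finite Borel measures on [0,1] satisfying the thermodynamical restriction (T). Suppose max supp μ_σ = max supp μ_ε = M and μ_σ({M}) = μ_ε({M}) = 0, and set τ := inf_{0 ≤ x < M} μ_σ([x,M])/μ_ε([x,M]) (note μ_ε([x,M]) > 0 for every x < M). Then for every ε > 0 there exists δ > 0 such that for every Borel set A ⊆ [M−δ, M]: τ·μ_ε(A) ≤ μ_σ(A) ≤ (τ+ε)·μ_ε(A). -/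
open MeasureTheory Complex Set

/-! Write `F x = μσ [x, M]` and `G x = με [x, M]`. Testing (T) on the rectangle `A × B` with
`B` below `t ≤ A` gives `μσ A · με B ≤ με A · μσ B`.

Lower bound: take `A = [t, M]`; then `τ ≤ F t / G t` turns this into `τ · με B ≤ μσ B` for
every `B ⊆ [0, t)`, and letting `t ↑ M` (`με` has no atom at `M`) covers every `B ⊆ [0, M]`.

Upper bound: pick `x < M` with `F x < (τ + ε) G x`. By continuity from below there is
`t ∈ (x, M)` with `F x < (τ + ε) με [x, t)`, and for `A ⊆ [t, M]` the rectangle inequality with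
`B = [x, t)` gives `μσ A · με B ≤ με A · F x ≤ (τ + ε) με A · με B`; divide by `με B`. -/

open scoped ENNReal

theorem ENNReal.ofReal_mul_le_iff {a b : ℝ≥0∞} (ha : a ≠ ∞) (hb₀ : b ≠ 0) (hb : b ≠ ∞) (r : ℝ) :
    ENNReal.ofReal r * b ≤ a ↔ r ≤ a.toReal / b.toReal := by
  rw [← ENNReal.le_div_iff_mul_le (.inl hb₀) (.inl hb),
    ENNReal.ofReal_le_iff_le_toReal (ENNReal.div_ne_top ha hb₀), ENNReal.toReal_div]

theorem ENNReal.lt_ofReal_mul_iff {a b : ℝ≥0∞} (ha : a ≠ ∞) (hb₀ : b ≠ 0) (hb : b ≠ ∞) (r : ℝ) :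
    a < ENNReal.ofReal r * b ↔ a.toReal / b.toReal < r := by
  simpa only [not_le] using (ENNReal.ofReal_mul_le_iff ha hb₀ hb r).not

section LeftLimit

variable {α : Type*} [MeasurableSpace α] [LinearOrder α] {μ : Measure α}

theorem measure_inter_Iio_of_subset_Iic {B : Set α} {M : α} (hB : B ⊆ Iic M) (hM : μ {M} = 0) :
    μ (B ∩ Iio M) = μ B := by
  have hBM : B ∩ Iio M = B \ {M} := by
    ext b
    simp only [mem_inter_iff, mem_Iio, mem_sdiff, mem_singleton_iff]
    exact and_congr_right fun hb => (hB hb).lt_iff_ne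
  rw [hBM, measure_sdiff_null hM]

variable [TopologicalSpace α] [OrderTopology α] [DenselyOrdered α] [FirstCountableTopology α]

theorem measure_inter_Iio_eq_biSup_Ioo (μ : Measure α) (B : Set α) {a M : α} (haM : a < M) :
    μ (B ∩ Iio M) = ⨆ t ∈ Ioo a M, μ (B ∩ Iio t) := by
  refine le_antisymm ?_ (iSup₂_le fun t ht => measure_mono (inter_subset_inter_right _
    (Iio_subset_Iio ht.2.le)))
  obtain ⟨u, hu_mono, hu_mem, hu_lim⟩ := exists_seq_strictMono_tendsto' haM
  rw [← (isLUB_of_tendsto_atTop hu_mono.monotone hu_lim).iUnion_Iio_eq, inter_iUnion,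
    Monotone.measure_iUnion fun m n hmn =>
      inter_subset_inter_right _ (Iio_subset_Iio (hu_mono.monotone hmn))]
  exact iSup_le fun n => le_iSup₂_of_le (u n) (hu_mem n) le_rfl

end LeftLimit

namespace IsMaxSupport

variable {μ : Measure ℝ} {M : ℝ}

theorem measure_Icc_pos (h : IsMaxSupport μ M) {t : ℝ} (ht : t < M) : 0 < μ (Icc t M) := by
  simpa only [sub_sub_cancel] using h.2.2 (M - t) (sub_pos.2 ht)

theorem pos (h : IsMaxSupport μ M) (hsupp : μ (Icc 0 1)ᶜ = 0) (hatom : μ {M} = 0) : 0 < M := by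
  refine h.1.1.lt_of_ne fun hM0 => (h.measure_Icc_pos (sub_one_lt M)).ne' ?_
  refine measure_mono_null (fun x hx => ?_) (measure_union_null hsupp hatom)
  rcases hx.2.lt_or_eq with hxM | hxM
  · exact .inl fun hx01 => (hM0 ▸ hxM).not_ge hx01.1
  · exact .inr hxM

end IsMaxSupport

namespace TDrestriction

variable {μσ με : Measure ℝ} [SFinite μσ]

theorem measure_mul_measure_le [SFinite με] (hT : TDrestriction μσ με) {A B : Set ℝ} {t : ℝ}
    (hA : MeasurableSet A) (hB : MeasurableSet B) (hAt : A ⊆ Icc t 1) (hBt : B ⊆ Ico 0 t) :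
    μσ A * με B ≤ με A * μσ B := by
  have h := hT (A ×ˢ B) (hA.prod hB) fun p ⟨ha, hb⟩ => by
    obtain ⟨hta, ha1⟩ := hAt ha
    obtain ⟨hb0, hbt⟩ := hBt hb
    have hba : p.2 < p.1 := hbt.trans_le hta
    exact ⟨hba, ⟨hb0.trans hba.le, ha1⟩, ⟨hb0, hba.le.trans ha1⟩⟩
  rwa [Measure.prod_prod, Measure.prod_prod] at h

variable [IsFiniteMeasure με] {M : ℝ}

theorem mul_measure_le_of_forall_Icc (hT : TDrestriction μσ με) (hMε : IsMaxSupport με M)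
    (hM : 0 < M) (hatom : με {M} = 0) {c : ℝ≥0∞}
    (hc : ∀ t ∈ Ioo 0 M, c * με (Icc t M) ≤ μσ (Icc t M))
    {A : Set ℝ} (hA : MeasurableSet A) (hAM : A ⊆ Icc 0 M) : c * με A ≤ μσ A := by
  rw [← measure_inter_Iio_of_subset_Iic (hAM.trans Icc_subset_Iic_self) hatom,
    measure_inter_Iio_eq_biSup_Ioo με A hM]
  simp only [ENNReal.mul_iSup]
  refine iSup₂_le fun t ht => ?_
  have hrect := hT.measure_mul_measure_le (t := t) measurableSet_Icc (hA.inter measurableSet_Iio)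
    (Icc_subset_Icc_right hMε.1.2) fun b hb => ⟨(hAM hb.1).1, hb.2⟩
  calc c * με (A ∩ Iio t) ≤ μσ (A ∩ Iio t) := by
        rw [← ENNReal.mul_le_mul_iff_right (hMε.measure_Icc_pos ht.2).ne' (measure_ne_top _ _)]
        calc με (Icc t M) * (c * με (A ∩ Iio t)) = c * με (Icc t M) * με (A ∩ Iio t) := by ring
          _ ≤ μσ (Icc t M) * με (A ∩ Iio t) := by gcongr; exact hc t ht
          _ ≤ με (Icc t M) * μσ (A ∩ Iio t) := hrect
    _ ≤ μσ A := measure_mono inter_subset_left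

theorem exists_forall_measure_le_mul (hT : TDrestriction μσ με) (hM1 : M ≤ 1)
    (hatom : με {M} = 0) {x : ℝ} (hx : x ∈ Ico 0 M) {c : ℝ≥0∞}
    (hc : μσ (Icc x M) < c * με (Icc x M)) :
    ∃ t ∈ Ioo x M, ∀ A, MeasurableSet A → A ⊆ Icc t M → μσ A ≤ c * με A := by
  rw [← measure_inter_Iio_of_subset_Iic Icc_subset_Iic_self hatom,
    measure_inter_Iio_eq_biSup_Ioo με _ hx.2] at hc
  simp only [ENNReal.mul_iSup, lt_iSup_iff] at hc
  obtain ⟨t, ht, hct⟩ := hc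
  refine ⟨t, ht, fun A hA hAt => ?_⟩
  set B := Icc x M ∩ Iio t
  have hB₀ : με B ≠ 0 := fun h => by simp [h] at hct
  have hrect := hT.measure_mul_measure_le (B := B) hA (measurableSet_Icc.inter measurableSet_Iio)
    (hAt.trans (Icc_subset_Icc_right hM1)) fun b hb => ⟨hx.1.trans hb.1.1, hb.2⟩
  rw [← ENNReal.mul_le_mul_iff_left hB₀ (measure_ne_top _ _)]
  calc μσ A * με B ≤ με A * μσ B := hrect
    _ ≤ με A * μσ (Icc x M) := by gcongr; exact inter_subset_left
    _ ≤ με A * (c * με B) := by gcongr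
    _ = c * με A * με B := by ring

end TDrestriction

theorem stmt_9_general (μσ με : Measure ℝ) [IsFiniteMeasure μσ] [IsFiniteMeasure με]
    (hεsupp : με (Set.Icc (0:ℝ) 1)ᶜ = 0)
    (hT : TDrestriction μσ με)
    (M : ℝ) (hMε : IsMaxSupport με M)
    (hatomε : με {M} = 0) :
    ∀ ε > 0, ∃ δ > 0, ∀ A : Set ℝ, MeasurableSet A → A ⊆ Set.Icc (M - δ) M →
      ENNReal.ofReal
          (sInf {r : ℝ | ∃ x ∈ Set.Ico (0:ℝ) M,
            r = (μσ (Set.Icc x M)).toReal / (με (Set.Icc x M)).toReal}) * με A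
        ≤ μσ A
      ∧ μσ A ≤
        ENNReal.ofReal
          ((sInf {r : ℝ | ∃ x ∈ Set.Ico (0:ℝ) M,
            r = (μσ (Set.Icc x M)).toReal / (με (Set.Icc x M)).toReal}) + ε) * με A := by
  intro ε hε
  have hM : 0 < M := hMε.pos hεsupp hatomε
  set S := {r : ℝ | ∃ x ∈ Ico (0:ℝ) M, r = (μσ (Icc x M)).toReal / (με (Icc x M)).toReal}
  have hS_bdd : BddBelow S := ⟨0, by rintro r ⟨x, -, rfl⟩; positivity⟩
  have hG : ∀ x ∈ Ico 0 M, με (Icc x M) ≠ 0 := fun x hx => (hMε.measure_Icc_pos hx.2).ne'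
  set τ := sInf S
  have hτ : ∀ x ∈ Ico 0 M, ENNReal.ofReal τ * με (Icc x M) ≤ μσ (Icc x M) := fun x hx =>
    (ENNReal.ofReal_mul_le_iff (measure_ne_top _ _) (hG x hx) (measure_ne_top _ _) τ).2
      (csInf_le hS_bdd ⟨x, hx, rfl⟩)
  have hS_ne : S.Nonempty := ⟨_, 0, ⟨le_rfl, hM⟩, rfl⟩
  obtain ⟨_, ⟨x, hx, rfl⟩, hx_lt⟩ := exists_lt_of_csInf_lt hS_ne (lt_add_of_pos_right τ hε)
  obtain ⟨t, ht, hupper⟩ := hT.exists_forall_measure_le_mul hMε.1.2 hatomε hx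
    ((ENNReal.lt_ofReal_mul_iff (measure_ne_top _ _) (hG x hx) (measure_ne_top _ _) _).2 hx_lt)
  refine ⟨M - t, sub_pos.2 ht.2, fun A hA hAt => ?_⟩
  rw [sub_sub_cancel] at hAt
  exact ⟨hT.mul_measure_le_of_forall_Icc hMε hM hatomε (fun s hs => hτ s (Ioo_subset_Ico_self hs))
    hA (hAt.trans (Icc_subset_Icc_left (hx.1.trans ht.1.le))), hupper A hA hAt⟩

theorem stmt_9 (μσ με : Measure ℝ) [IsFiniteMeasure μσ] [IsFiniteMeasure με]
    (hσ : μσ ≠ 0) (hε : με ≠ 0)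
    (hσsupp : μσ (Set.Icc (0:ℝ) 1)ᶜ = 0) (hεsupp : με (Set.Icc (0:ℝ) 1)ᶜ = 0)
    (hT : TDrestriction μσ με)
    (M : ℝ) (hMσ : IsMaxSupport μσ M) (hMε : IsMaxSupport με M)
    (hatomσ : μσ {M} = 0) (hatomε : με {M} = 0) :
    ∀ ε > 0, ∃ δ > 0, ∀ A : Set ℝ, MeasurableSet A → A ⊆ Set.Icc (M - δ) M →
      ENNReal.ofReal
          (sInf {r : ℝ | ∃ x ∈ Set.Ico (0:ℝ) M,
            r = (μσ (Set.Icc x M)).toReal / (με (Set.Icc x M)).toReal}) * με A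
        ≤ μσ A
      ∧ μσ A ≤
        ENNReal.ofReal
          ((sInf {r : ℝ | ∃ x ∈ Set.Ico (0:ℝ) M,
            r = (μσ (Set.Icc x M)).toReal / (με (Set.Icc x M)).toReal}) + ε) * με A :=
  stmt_9_general μσ με hεsupp hT M hMε hatomε
end

section
/- Let μ_σ and μ_ε be positive finite Borel measures on [0,1] satisfying the thermodynamical restriction (T). Then for all 0 ≤ y < x ≤ 1: μ_σ([y,1])·μ_ε([x,1]) ≥ μ_σ([x,1])·μ_ε([y,1]). (Equivalently, the function F(x) = μ_σ([x,1])/μ_ε([x,1]) is non-increasing wherever its denominator is positive.) -/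
/-!
Split `[y,1] = [y,x) ∪ [x,1]` in both measures: the `[x,1] × [x,1]` terms agree on both sides,
and (T) applied to the rectangle `[x,1] × [y,x) ⊆ Δ` compares the cross terms.
-/

open MeasureTheory Complex Set

theorem MeasureTheory.measure_Icc_eq_measure_Ico_add_measure_Icc {α : Type*} [LinearOrder α]
    [TopologicalSpace α] [OrderClosedTopology α] [MeasurableSpace α] [OpensMeasurableSpace α]
    (μ : Measure α) {a b c : α} (hab : a ≤ b) (hbc : b ≤ c) :
    μ (Icc a c) = μ (Ico a b) + μ (Icc b c) := by
  rw [← Ico_union_Icc_eq_Icc hab hbc,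
    measure_union (disjoint_left.mpr fun _ h h' => (not_le.mpr h.2) h'.1) measurableSet_Icc]

theorem TDrestriction.measure_mul_le_of_lt {μσ με : Measure ℝ} [SFinite μσ] [SFinite με]
    (hT : TDrestriction μσ με) {A B : Set ℝ} (hA : MeasurableSet A) (hB : MeasurableSet B)
    (hA01 : A ⊆ Icc 0 1) (hB01 : B ⊆ Icc 0 1) (hBA : ∀ a ∈ A, ∀ b ∈ B, b < a) :
    μσ A * με B ≤ με A * μσ B := by
  rw [← Measure.prod_prod, ← Measure.prod_prod]
  exact hT _ (hA.prod hB) fun p ⟨ha, hb⟩ => ⟨hBA _ ha _ hb, hA01 ha, hB01 hb⟩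

theorem stmt_10 (μσ με : Measure ℝ) [IsFiniteMeasure μσ] [IsFiniteMeasure με]
    (hT : TDrestriction μσ με) :
    ∀ x y : ℝ, 0 ≤ y → y < x → x ≤ 1 →
      μσ (Set.Icc x 1) * με (Set.Icc y 1) ≤ μσ (Set.Icc y 1) * με (Set.Icc x 1) := by
  intro x y hy hyx hx1
  have hcross : μσ (Icc x 1) * με (Ico y x) ≤ με (Icc x 1) * μσ (Ico y x) :=
    hT.measure_mul_le_of_lt measurableSet_Icc measurableSet_Ico
      (Icc_subset_Icc_left (hy.trans hyx.le))
      (Ico_subset_Icc_self.trans (Icc_subset_Icc hy hx1))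
      fun a ha b hb => hb.2.trans_le ha.1
  calc μσ (Icc x 1) * με (Icc y 1)
      = μσ (Icc x 1) * με (Ico y x) + μσ (Icc x 1) * με (Icc x 1) := by
        rw [measure_Icc_eq_measure_Ico_add_measure_Icc με hyx.le hx1, mul_add]
    _ ≤ με (Icc x 1) * μσ (Ico y x) + μσ (Icc x 1) * με (Icc x 1) := by gcongr
    _ = μσ (Icc y 1) * με (Icc x 1) := by
        rw [measure_Icc_eq_measure_Ico_add_measure_Icc μσ hyx.le hx1]; ring
end

section
/- Let μ_σ and μ_ε be nonzero positive finite Borel measures on [0,1] satisfying the thermodynamical restriction (T), and let Ψ(s) be the principal square root of Φ_σ(s)/Φ_ε(s) for s ∈ ℂ∖(−∞,0] (well defined since Φ_ε has no zeros there). Then the imaginary part of Ψ has sign opposite to that of s: if Im s > 0 then Im Ψ(s) ≤ 0, if Im s < 0 then Im Ψ(s) ≥ 0, and if s ∈ (0,∞) then Ψ(s) is a positive real number. -/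
/-!
Write `θ = arg s`. For `α ∈ [0, 1]` the argument `αθ` of `s ^ α` lies within `|θ| / 2 < π / 2`
of `θ / 2`, so `Φ_σ(s)` and `Φ_ε(s)` lie in a common open half-plane and `w = Φ_σ(s) / Φ_ε(s)`
avoids `(-∞, 0]`. Hence `Ψ(s) = w ^ (1/2)` has positive real part and `Im Ψ(s)` has the sign of
`Im w`, i.e. of `Im (Φ_σ(s) · conj Φ_ε(s)) = ∬ K d(μ_σ × μ_ε)` with
`K(α, β) = |s|^(α+β) sin ((α - β) θ)`. The kernel is antisymmetric, so this equals
`∫_Δ K d(μ_σ × μ_ε) - ∫_Δ K d(μ_ε × μ_σ)`; for `θ ≥ 0` the kernel is nonnegative on `Δ`, and (T)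
makes the difference nonpositive. The lower half-plane follows by `Ψ(conj s) = conj Ψ(s)`, which
also makes `Ψ` real on `(0, ∞)`.
-/

open MeasureTheory Complex Set

/-- `Psi μσ με s` is the principal square root of `Φσ(s)/Φε(s)`. -/
noncomputable def Psi (μσ με : Measure ℝ) (s : ℂ) : ℂ :=
  (Phi μσ s / Phi με s) ^ ((1 : ℂ) / 2)

open scoped ComplexConjugate

/-- The set `Δ` of the thermodynamical restriction. -/
def triangle : Set (ℝ × ℝ) := {p | p.2 < p.1 ∧ p.1 ∈ Icc (0 : ℝ) 1 ∧ p.2 ∈ Icc (0 : ℝ) 1}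

lemma measurableSet_triangle : MeasurableSet triangle :=
  (measurableSet_lt measurable_snd measurable_fst).inter
    ((measurable_fst measurableSet_Icc).inter (measurable_snd measurableSet_Icc))

lemma inter_Icc_prod_Icc_eq_triangle :
    {p : ℝ × ℝ | p.2 < p.1} ∩ Icc (0 : ℝ) 1 ×ˢ Icc (0 : ℝ) 1 = triangle := by
  ext p; simp only [triangle, mem_inter_iff, mem_prod, mem_ofPred_eq]

lemma TDrestriction.restrict_triangle_le {μσ με : Measure ℝ} (hT : TDrestriction μσ με) :
    (μσ.prod με).restrict triangle ≤ (με.prod μσ).restrict triangle := by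
  refine Measure.le_iff.2 fun A hA => ?_
  rw [Measure.restrict_apply hA, Measure.restrict_apply hA]
  exact hT _ (hA.inter measurableSet_triangle) inter_subset_right

lemma integral_prod_eq_setIntegral_sub_of_antisymm {ν₁ ν₂ : Measure ℝ} [SFinite ν₁] [SFinite ν₂]
    {g : ℝ × ℝ → ℝ} (hg : ∀ p, g p.swap = -g p) (hint : Integrable g (ν₁.prod ν₂)) :
    ∫ p, g p ∂(ν₁.prod ν₂) =
      ∫ p in {p | p.2 < p.1}, g p ∂(ν₁.prod ν₂) - ∫ p in {p | p.2 < p.1}, g p ∂(ν₂.prod ν₁) := by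
  have hΔ : MeasurableSet {p : ℝ × ℝ | p.2 < p.1} := measurableSet_lt measurable_snd measurable_fst
  set L := {p : ℝ × ℝ | p.2 < p.1}.indicator g
  have hL : ∀ p, L p.swap = L p - g p := by
    rintro ⟨a, b⟩
    have hswap := hg (a, b)
    simp only [Prod.swap_prod_mk] at hswap
    simp only [L, indicator_apply, mem_ofPred_eq, Prod.swap_prod_mk]
    rcases lt_trichotomy a b with h | rfl | h
    · simp [h, not_lt.2 h.le, hswap]
    · rw [if_neg (lt_irrefl a)] at *; linarith
    · simp [h, not_lt.2 h.le]
  have hLint : Integrable L (ν₁.prod ν₂) := hint.indicator hΔ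
  have key := integral_prod_swap (μ := ν₂) (ν := ν₁) L
  simp only [hL] at key
  rw [integral_sub hLint hint, integral_indicator hΔ, integral_indicator hΔ] at key
  linarith

lemma div_mem_slitPlane_of_re_pos {u v : ℂ} (hu : 0 < u.re) (hv : 0 < v.re) :
    u / v ∈ slitPlane := by
  rw [mem_slitPlane_iff_not_le_zero, le_def]
  rintro ⟨hre, him⟩
  rw [zero_re] at hre
  have hv0 : v ≠ 0 := fun h => by simp [h] at hv
  have : u.re = (u / v).re * v.re := by
    conv_lhs => rw [← div_mul_cancel₀ u hv0]
    simp only [mul_re, him, zero_im, zero_mul, sub_zero]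
  nlinarith

lemma re_cpow_half_pos {w : ℂ} (hw : w ∈ slitPlane) : 0 < (w ^ ((1 : ℂ) / 2)).re := by
  rw [show (1 : ℂ) / 2 = ((1 / 2 : ℝ) : ℂ) by push_cast; ring, cpow_ofReal_re]
  refine mul_pos (Real.rpow_pos_of_pos (norm_pos_iff.2 (slitPlane_ne_zero hw)) _)
    (Real.cos_pos_of_mem_Ioo ⟨?_, ?_⟩)
  · linarith [neg_pi_lt_arg w]
  · linarith [(arg_le_pi w).lt_of_ne (slitPlane_arg_ne_pi hw)]

lemma im_cpow_half_nonpos {w : ℂ} (hw : w ∈ slitPlane) (him : w.im ≤ 0) :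
    (w ^ ((1 : ℂ) / 2)).im ≤ 0 := by
  have harg : w.arg ≤ 0 := by
    rcases him.lt_or_eq with h | h
    · exact (arg_neg_iff.2 h).le
    · exact (arg_eq_zero_iff.2 ⟨(mem_slitPlane_iff.1 hw).resolve_right (not_not.2 h) |>.le, h⟩).le
  rw [show (1 : ℂ) / 2 = ((1 / 2 : ℝ) : ℂ) by push_cast; ring, cpow_ofReal_im]
  exact mul_nonpos_of_nonneg_of_nonpos (by positivity)
    (Real.sin_nonpos_of_nonpos_of_neg_pi_le (by linarith) (by linarith [neg_pi_lt_arg w]))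

lemma continuous_cpow_ofReal {s : ℂ} (hs : s ≠ 0) : Continuous fun α : ℝ => s ^ (α : ℂ) :=
  continuous_ofReal.const_cpow (Or.inl hs)

lemma Phi_conj (μ : Measure ℝ) {s : ℂ} (hs : s.arg ≠ Real.pi) :
    Phi μ (conj s) = conj (Phi μ s) := by
  simp only [Phi, ← integral_conj, conj_cpow _ _ hs, conj_ofReal]

lemma Psi_conj {μσ με : Measure ℝ} {s : ℂ} (hs : s.arg ≠ Real.pi)
    (hw : (Phi μσ s / Phi με s).arg ≠ Real.pi) :
    Psi μσ με (conj s) = conj (Psi μσ με s) := by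
  rw [Psi, Psi, Phi_conj _ hs, Phi_conj _ hs, ← map_div₀, conj_cpow _ _ hw, map_div₀, map_one,
    map_ofNat]

section Phi

variable {μ μσ με : Measure ℝ} {s : ℂ}

lemma re_Phi_div_cpow_half_pos [IsFiniteMeasure μ] (hμ : μ (Icc 0 1) ≠ 0)
    (hs : s ∈ slitPlane) :
    0 < (Phi μ s / s ^ ((1 : ℂ) / 2)).re := by
  have hs0 : s ≠ 0 := slitPlane_ne_zero hs
  have harg : |s.arg| < Real.pi :=
    abs_lt.2 ⟨neg_pi_lt_arg s, (arg_le_pi s).lt_of_ne (slitPlane_arg_ne_pi hs)⟩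
  set f : ℝ → ℝ := fun α => ‖s‖ ^ (α - 1 / 2) * Real.cos (s.arg * (α - 1 / 2))
  have hf : ∀ α : ℝ, (s ^ (α : ℂ) / s ^ ((1 : ℂ) / 2)).re = f α := fun α => by
    rw [← cpow_sub _ _ hs0, show (α : ℂ) - 1 / 2 = ((α - 1 / 2 : ℝ) : ℂ) by push_cast; ring,
      cpow_ofReal_re]
  have hfpos : ∀ α ∈ Icc (0 : ℝ) 1, 0 < f α := fun α hα => by
    refine mul_pos (Real.rpow_pos_of_pos (norm_pos_iff.2 hs0) _) (Real.cos_pos_of_mem_Ioo ?_)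
    have : |s.arg * (α - 1 / 2)| < Real.pi / 2 := by
      rw [abs_mul]
      have : |α - 1 / 2| ≤ 1 / 2 := abs_le.2 ⟨by linarith [hα.1], by linarith [hα.2]⟩
      nlinarith [abs_nonneg s.arg]
    exact abs_lt.1 this
  have hint : IntegrableOn (fun α : ℝ => s ^ (α : ℂ) / s ^ ((1 : ℂ) / 2)) (Icc 0 1) μ :=
    ((continuous_cpow_ofReal hs0).div_const _).continuousOn.integrableOn_compact isCompact_Icc
  rw [Phi, ← integral_div, ← RCLike.re_to_complex, ← integral_re hint]
  simp only [RCLike.re_to_complex, hf]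
  rw [setIntegral_pos_iff_support_of_nonneg_ae
    ((ae_restrict_mem measurableSet_Icc).mono fun α hα => (hfpos α hα).le)
    (hint.re.congr <| Filter.Eventually.of_forall fun α => by
      simp only [RCLike.re_to_complex, hf])]
  rwa [inter_eq_right.2 fun α hα => Function.mem_support.2 (hfpos α hα).ne', pos_iff_ne_zero]

noncomputable def crossIm (s : ℂ) (p : ℝ × ℝ) : ℝ := (s ^ (p.1 : ℂ) * conj (s ^ (p.2 : ℂ))).im

lemma crossIm_swap (s : ℂ) (p : ℝ × ℝ) : crossIm s p.swap = -crossIm s p := by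
  rw [crossIm, crossIm, ← conj_im, map_mul, conj_conj, mul_comm (conj _)]
  rfl

lemma crossIm_nonneg {p : ℝ × ℝ} (harg : 0 ≤ s.arg) (hp : p ∈ triangle) : 0 ≤ crossIm s p := by
  have h : crossIm s p = ‖s‖ ^ p.1 * ‖s‖ ^ p.2 * Real.sin (s.arg * (p.1 - p.2)) := by
    simp only [crossIm, mul_im, conj_re, conj_im, cpow_ofReal_re, cpow_ofReal_im, mul_sub,
      Real.sin_sub]
    ring
  obtain ⟨hlt, ⟨-, h1⟩, ⟨h0, -⟩⟩ := hp
  rw [h]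
  refine mul_nonneg (by positivity) (Real.sin_nonneg_of_nonneg_of_le_pi (by nlinarith) ?_)
  calc s.arg * (p.1 - p.2) ≤ s.arg * 1 := mul_le_mul_of_nonneg_left (by linarith) harg
    _ ≤ Real.pi := by simpa using arg_le_pi s

lemma im_Phi_mul_conj_Phi_nonpos [IsFiniteMeasure μσ] [IsFiniteMeasure με]
    (hT : TDrestriction μσ με) (hs : s ≠ 0) (harg : 0 ≤ s.arg) :
    (Phi μσ s * conj (Phi με s)).im ≤ 0 := by
  set G : ℝ × ℝ → ℂ := fun p => s ^ (p.1 : ℂ) * conj (s ^ (p.2 : ℂ))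
  have hG : ∀ ν : Measure (ℝ × ℝ), IsFiniteMeasure ν → IntegrableOn G (Icc 0 1 ×ˢ Icc 0 1) ν :=
    fun _ _ => ((continuous_cpow_ofReal hs).comp continuous_fst).mul
      (continuous_conj.comp ((continuous_cpow_ofReal hs).comp continuous_snd))
      |>.continuousOn.integrableOn_compact (isCompact_Icc.prod isCompact_Icc)
  have hG' : Integrable G ((μσ.restrict (Icc 0 1)).prod (με.restrict (Icc 0 1))) := by
    rw [Measure.prod_restrict]; exact hG _ inferInstance
  have hlower : ∀ (ν₁ ν₂ : Measure ℝ) [SFinite ν₁] [SFinite ν₂],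
      ∫ p in {p | p.2 < p.1}, crossIm s p ∂((ν₁.restrict (Icc 0 1)).prod (ν₂.restrict (Icc 0 1)))
        = ∫ p in triangle, crossIm s p ∂(ν₁.prod ν₂) := fun _ _ _ _ => by
    rw [Measure.prod_restrict, Measure.restrict_restrict (measurableSet_lt measurable_snd
      measurable_fst), inter_Icc_prod_Icc_eq_triangle]
  calc (Phi μσ s * conj (Phi με s)).im
      = ∫ p, crossIm s p ∂((μσ.restrict (Icc 0 1)).prod (με.restrict (Icc 0 1))) := by
        rw [Phi, Phi, ← integral_conj, ← integral_prod_mul, ← RCLike.im_to_complex,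
          ← integral_im hG']
        rfl
    _ = ∫ p in triangle, crossIm s p ∂(μσ.prod με)
          - ∫ p in triangle, crossIm s p ∂(με.prod μσ) := by
        rw [integral_prod_eq_setIntegral_sub_of_antisymm (crossIm_swap s) hG'.im, hlower, hlower]
    _ ≤ 0 := sub_nonpos.2 <| integral_mono_measure hT.restrict_triangle_le
        (ae_restrict_of_forall_mem measurableSet_triangle fun _ hp => crossIm_nonneg harg hp)
        (IntegrableOn.mono_set (f := crossIm s) (hG _ inferInstance).im
          fun _ hp => ⟨hp.2.1, hp.2.2⟩)

end Phi

section Psi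

variable {μσ με : Measure ℝ} [IsFiniteMeasure μσ] [IsFiniteMeasure με] {s : ℂ}

lemma Phi_div_mem_slitPlane (hσ : μσ (Icc 0 1) ≠ 0) (hε : με (Icc 0 1) ≠ 0)
    (hs : s ∈ slitPlane) : Phi μσ s / Phi με s ∈ slitPlane := by
  have hroot : s ^ ((1 : ℂ) / 2) ≠ 0 :=
    (cpow_ne_zero_iff_of_exponent_ne_zero (by norm_num)).2 (slitPlane_ne_zero hs)
  rw [← div_div_div_cancel_right₀ hroot (Phi μσ s)]
  exact div_mem_slitPlane_of_re_pos (re_Phi_div_cpow_half_pos hσ hs)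
    (re_Phi_div_cpow_half_pos hε hs)

lemma im_Psi_nonpos_of_arg_nonneg (hT : TDrestriction μσ με) (hs : s ≠ 0) (harg : 0 ≤ s.arg)
    (hw : Phi μσ s / Phi με s ∈ slitPlane) : (Psi μσ με s).im ≤ 0 := by
  refine im_cpow_half_nonpos hw ?_
  have hdiv : (Phi μσ s / Phi με s).im
      = (Phi μσ s * conj (Phi με s)).im / normSq (Phi με s) := by
    rw [div_im, mul_im, conj_re, conj_im]; ring
  rw [hdiv]
  exact div_nonpos_of_nonpos_of_nonneg (im_Phi_mul_conj_Phi_nonpos hT hs harg) (normSq_nonneg _)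

end Psi

theorem stmt_13 (μσ με : Measure ℝ) [IsFiniteMeasure μσ] [IsFiniteMeasure με]
    (hσ : μσ ≠ 0) (hε : με ≠ 0)
    (hσsupp : μσ (Set.Icc (0:ℝ) 1)ᶜ = 0) (hεsupp : με (Set.Icc (0:ℝ) 1)ᶜ = 0)
    (hT : TDrestriction μσ με) :
    ∀ s : ℂ, ¬(s.im = 0 ∧ s.re ≤ 0) →
      (0 < s.im → (Psi μσ με s).im ≤ 0)
      ∧ (s.im < 0 → 0 ≤ (Psi μσ με s).im)
      ∧ (s.im = 0 → 0 < s.re → (Psi μσ με s).im = 0 ∧ 0 < (Psi μσ με s).re) := by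
  intro s hs
  replace hs : s ∈ slitPlane := by
    rw [mem_slitPlane_iff_not_le_zero, le_def]; simpa [and_comm] using hs
  have hI : ∀ μ : Measure ℝ, μ ≠ 0 → μ (Icc 0 1)ᶜ = 0 → μ (Icc 0 1) ≠ 0 := fun μ hμ hc h0 =>
    hμ <| Measure.measure_univ_eq_zero.1 <| by
      rw [← measure_add_measure_compl measurableSet_Icc, h0, hc, add_zero]
  have hσI := hI μσ hσ hσsupp
  have hεI := hI με hε hεsupp
  have hw := Phi_div_mem_slitPlane hσI hεI hs
  have hconj := Psi_conj (μσ := μσ) (με := με) (slitPlane_arg_ne_pi hs) (slitPlane_arg_ne_pi hw)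
  refine ⟨fun him =>
      im_Psi_nonpos_of_arg_nonneg hT (slitPlane_ne_zero hs) (arg_nonneg_iff.2 him.le) hw,
    fun him => ?_, fun him _ => ⟨?_, re_cpow_half_pos hw⟩⟩
  · have hs' : conj s ∈ slitPlane := by rw [mem_slitPlane_iff] at hs ⊢; simpa using hs
    have := im_Psi_nonpos_of_arg_nonneg hT (slitPlane_ne_zero hs')
      (arg_nonneg_iff.2 (by simp [him.le])) (Phi_div_mem_slitPlane hσI hεI hs')
    rwa [hconj, conj_im, neg_nonpos] at this
  · rw [conj_eq_iff_im.2 him] at hconj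
    exact conj_eq_iff_im.1 hconj.symm
end

section
/- Let μ_σ and μ_ε be nonzero positive finite Borel measures on [0,1] satisfying the thermodynamical restriction (T). Suppose min supp μ_σ = min supp μ_ε = m and max supp μ_σ = max supp μ_ε = M with m < M. Then for every δ with 0 < δ < (M−m)/2: μ_σ([m, m+δ])·μ_ε([M−δ, M]) ≥ μ_σ([M−δ, M])·μ_ε([m, m+δ]). (This expresses that the equilibrium ratio ρ = lim_{x→m} μ_σ([m,x])/μ_ε([m,x]) dominates the glass ratio τ = lim_{x→M} μ_σ([x,M])/μ_ε([x,M]), i.e., ρ ≥ τ, so the equilibrium compliance is at least the glass compliance.) -/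
open MeasureTheory Complex Set

/-- `m` is the smallest point of the support of the measure `μ` (supported in `[0,1]`). -/
def IsMinSupport (μ : Measure ℝ) (m : ℝ) : Prop :=
  m ∈ Set.Icc (0:ℝ) 1 ∧ μ (Set.Iio m) = 0 ∧ ∀ ε > 0, 0 < μ (Set.Icc m (m + ε))

theorem stmt_17 (μσ με : Measure ℝ) [IsFiniteMeasure μσ] [IsFiniteMeasure με]
    (hσ : μσ ≠ 0) (hε : με ≠ 0)
    (hσsupp : μσ (Set.Icc (0:ℝ) 1)ᶜ = 0) (hεsupp : με (Set.Icc (0:ℝ) 1)ᶜ = 0)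
    (hT : TDrestriction μσ με)
    (m M : ℝ) (hmσ : IsMinSupport μσ m) (hmε : IsMinSupport με m)
    (hMσ : IsMaxSupport μσ M) (hMε : IsMaxSupport με M) (hmM : m < M) :
    ∀ δ : ℝ, 0 < δ → δ < (M - m) / 2 →
      μσ (Set.Icc (M - δ) M) * με (Set.Icc m (m + δ))
        ≤ μσ (Set.Icc m (m + δ)) * με (Set.Icc (M - δ) M) := by
  intro δ hδ hδ2
  obtain ⟨⟨hm0, _⟩, _, _⟩ := hmσ
  obtain ⟨⟨_, hM1⟩, _, _⟩ := hMσ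
  have key := hT (Set.Icc (M - δ) M ×ˢ Set.Icc m (m + δ))
    (measurableSet_Icc.prod measurableSet_Icc) ?_
  · rwa [Measure.prod_prod, Measure.prod_prod, mul_comm (με _)] at key
  · rintro ⟨x, y⟩ ⟨⟨hx1, hx2⟩, hy1, hy2⟩
    refine ⟨lt_of_le_of_lt hy2 (lt_of_lt_of_le (by linarith) hx1), ⟨by linarith, by linarith⟩,
      by linarith, by linarith⟩
end
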